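/- arXiv:2504.17559 — 5 statements merged into one kernel-verified Lean document; each statement's English description precedes it below -/
import Mathlib

section
/- For any measurable subset A of the product space X^n, the function x ↦ d_T(x, A), where d_T is Talagrand's convex distance, satisfies the bounded differences condition in quadratic mean with constant v = 1, i.e., for all x, y there exist coefficients c_i(x) with ∑ c_i(x)² ≤ 1 such that d_T(x,A) − d_T(y,A) ≤ ∑_{i=1}^n c_i(x)·1[x_i ≠ y_i]. -/
open scoped Classical
open Finset

/-- Talagrand's convex distance from a point `x` to a set `A` in a product space. -/
noncomputable def convexDist {n : ℕ} {X : Fin n → Type*} (x : ∀ i, X i)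
    (A : Set (∀ i, X i)) : ℝ :=
  ⨆ α : {α : Fin n → ℝ // (∀ i, 0 ≤ α i) ∧ ∑ i, (α i) ^ 2 ≤ 1},
    ⨅ y : A, ∑ i, (if x i ≠ (y : ∀ i, X i) i then (α : Fin n → ℝ) i else 0)

/-- For any nonempty set `A`, the function `x ↦ d_T(x, A)` satisfies the bounded
differences condition in quadratic mean with constant `v = 1`. -/
theorem convexDist_boundedDifferences {n : ℕ} {X : Fin n → Type*}
    (A : Set (∀ i, X i)) (hA : A.Nonempty) :
    ∃ c : (∀ i, X i) → Fin n → ℝ,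
      (∀ x, ∑ i, (c x i) ^ 2 ≤ 1) ∧
      ∀ x y, convexDist x A - convexDist y A ≤
        ∑ i, (if x i ≠ y i then c x i else 0) := by
  have hAne : Nonempty A := hA.to_subtype
  set K : Set (Fin n → ℝ) := {α | (∀ i, 0 ≤ α i) ∧ ∑ i, (α i) ^ 2 ≤ 1} with hKdef
  have hK0 : (fun _ => (0:ℝ)) ∈ K := ⟨fun i => le_refl 0, by simp⟩
  set g : (∀ i, X i) → (Fin n → ℝ) → ℝ := fun x α =>
    ⨅ y : A, ∑ i, (if x i ≠ (y : ∀ i, X i) i then α i else 0) with hgdef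
  -- boundedness below of the inf family
  have hbdd : ∀ (x : ∀ i, X i) (α : Fin n → ℝ),
      BddBelow (Set.range fun y : A => ∑ i, (if x i ≠ (y : ∀ i, X i) i then α i else 0)) := by
    intro x α
    refine ⟨∑ i, -(|α i|), ?_⟩
    rintro _ ⟨y, rfl⟩
    refine Finset.sum_le_sum fun i _ => ?_
    by_cases h : x i ≠ (y : ∀ i, X i) i
    · rw [if_pos h]; exact neg_abs_le _
    · rw [if_neg h]; exact neg_nonpos.mpr (abs_nonneg _)
  -- g x is Lipschitz
  have hlip : ∀ x : ∀ i, X i, LipschitzWith n (g x) := by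
    intro x
    apply LipschitzWith.of_le_add_mul
    intro α β
    push_cast
    have key : ∀ y : A, (∑ i, (if x i ≠ (y : ∀ i, X i) i then α i else 0))
        ≤ (∑ i, (if x i ≠ (y : ∀ i, X i) i then β i else 0)) + n * dist α β := by
      intro y
      have h1 : ∀ i, (if x i ≠ (y : ∀ i, X i) i then α i else 0)
          ≤ (if x i ≠ (y : ∀ i, X i) i then β i else 0) + dist α β := by
        intro i
        have hd : dist (α i) (β i) ≤ dist α β := dist_le_pi_dist α β i
        rw [Real.dist_eq] at hd
        have h4 : α i - β i ≤ |α i - β i| := le_abs_self _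
        have h3 : (0:ℝ) ≤ dist α β := dist_nonneg
        by_cases h : x i ≠ (y : ∀ i, X i) i
        · rw [if_pos h, if_pos h]; linarith
        · rw [if_neg h, if_neg h]; linarith
      calc (∑ i, (if x i ≠ (y : ∀ i, X i) i then α i else 0))
          ≤ ∑ i, ((if x i ≠ (y : ∀ i, X i) i then β i else 0) + dist α β) :=
            Finset.sum_le_sum fun i _ => h1 i
        _ = (∑ i, (if x i ≠ (y : ∀ i, X i) i then β i else 0)) + n * dist α β := by
            rw [Finset.sum_add_distrib]; simp [Finset.card_univ, mul_comm]
    have h7 : g x α - n * dist α β ≤ g x β := by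
      refine le_ciInf fun y => ?_
      have h5 := ciInf_le (hbdd x α) y
      have h6 := key y
      simp only [hgdef] at *
      linarith
    linarith
  -- K is compact
  have hKcpt : IsCompact K := by
    have hsub : K ⊆ Set.pi Set.univ (fun _ : Fin n => Set.Icc (0:ℝ) 1) := by
      rintro α ⟨h1, h2⟩ i _
      refine ⟨h1 i, ?_⟩
      have : (α i) ^ 2 ≤ 1 := by
        refine le_trans ?_ h2
        exact Finset.single_le_sum (f := fun j => (α j)^2)
          (fun j _ => sq_nonneg _) (Finset.mem_univ i)
      nlinarith [h1 i]
    have hclosed : IsClosed K := by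
      have h1 : IsClosed {α : Fin n → ℝ | ∀ i, 0 ≤ α i} := by
        have : {α : Fin n → ℝ | ∀ i, 0 ≤ α i} = ⋂ i, {α | 0 ≤ α i} := by
          ext α; simp
        rw [this]
        exact isClosed_iInter fun i => isClosed_le continuous_const (continuous_apply i)
      have h2 : IsClosed {α : Fin n → ℝ | ∑ i, (α i) ^ 2 ≤ 1} :=
        isClosed_le (by continuity) continuous_const
      exact h1.inter h2
    exact (isCompact_univ_pi fun _ => isCompact_Icc).of_isClosed_subset hclosed hsub
  -- for each x, pick a maximizer of g x on K
  have hmax : ∀ x : ∀ i, X i, ∃ α ∈ K, IsMaxOn (g x) K α := fun x =>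
    hKcpt.exists_isMaxOn ⟨_, hK0⟩ (hlip x).continuous.continuousOn
  choose c hcK hcmax using hmax
  refine ⟨c, fun x => (hcK x).2, fun x y => ?_⟩
  -- convexDist x A = sup over the subtype; show the three inequalities
  have hbddAbove : ∀ z : ∀ i, X i, BddAbove (Set.range fun α :
      {α : Fin n → ℝ // (∀ i, 0 ≤ α i) ∧ ∑ i, (α i) ^ 2 ≤ 1} => g z (α : Fin n → ℝ)) := by
    intro z
    refine ⟨g z (c z), ?_⟩
    rintro _ ⟨α, rfl⟩
    exact hcmax z α.2
  haveI : Nonempty {α : Fin n → ℝ // (∀ i, 0 ≤ α i) ∧ ∑ i, (α i) ^ 2 ≤ 1} :=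
    ⟨⟨fun _ => 0, hK0⟩⟩
  have h1 : convexDist x A ≤ g x (c x) := by
    rw [convexDist]
    exact ciSup_le fun α => hcmax x α.2
  have h2 : g y (c x) ≤ convexDist y A := by
    rw [convexDist]
    exact le_ciSup (hbddAbove y) (⟨c x, hcK x⟩ :
      {α : Fin n → ℝ // (∀ i, 0 ≤ α i) ∧ ∑ i, (α i) ^ 2 ≤ 1})
  have h3 : g x (c x) ≤ g y (c x) + ∑ i, (if x i ≠ y i then c x i else 0) := by
    have key : ∀ z : A, (∑ i, (if x i ≠ (z : ∀ i, X i) i then c x i else 0))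
        ≤ (∑ i, (if y i ≠ (z : ∀ i, X i) i then c x i else 0))
          + ∑ i, (if x i ≠ y i then c x i else 0) := by
      intro z
      rw [← Finset.sum_add_distrib]
      refine Finset.sum_le_sum fun i _ => ?_
      have hnn := (hcK x).1 i
      by_cases hxz : x i ≠ (z : ∀ i, X i) i
      · by_cases hyz : y i ≠ (z : ∀ i, X i) i
        · by_cases hxy : x i ≠ y i <;> simp [hxz, hyz, hxy] <;> linarith
        · push_neg at hyz
          have hxy : x i ≠ y i := fun h => hxz (h.trans hyz)
          simp [hxz, hyz, hxy]
      · by_cases hyz : y i ≠ (z : ∀ i, X i) i <;> by_cases hxy : x i ≠ y i <;>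
          simp [hxz, hyz, hxy] <;> linarith
    have h7 : g x (c x) - ∑ i, (if x i ≠ y i then c x i else 0) ≤ g y (c x) := by
      refine le_ciInf fun z => ?_
      have h5 := ciInf_le (hbdd x (c x)) z
      have h6 := key z
      simp only [hgdef] at *
      linarith
    linarith
  linarith
end

section
/- Let A be measurable and let Z = d_T(X, A) with θ = E[Z], and suppose both tails satisfy P(Z − θ ≥ t) ≤ exp(−t²/2) and P(θ − Z ≥ t) ≤ exp(−t²/2) for all t ≥ 0. Then P(X ∈ A)·P(d_T(X,A) ≥ t) ≤ exp(−t²/4) for all t ≥ 0. -/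
open scoped Classical
open Finset MeasureTheory

lemma convexDist_nonneg' {n : ℕ} {X : Fin n → Type*} (x : ∀ i, X i)
    (A : Set (∀ i, X i)) : 0 ≤ convexDist x A := by
  apply Real.iSup_nonneg
  intro α
  apply Real.iInf_nonneg
  intro y
  apply Finset.sum_nonneg
  intro i _
  split
  · exact α.2.1 i
  · exact le_rfl

lemma convexDist_le_zero {n : ℕ} {X : Fin n → Type*} {x : ∀ i, X i}
    {A : Set (∀ i, X i)} (hx : x ∈ A) : convexDist x A ≤ 0 := by
  apply Real.iSup_le _ le_rfl
  intro α
  have hb : BddBelow (Set.range fun y : A =>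
      ∑ i, (if x i ≠ (y : ∀ i, X i) i then (α : Fin n → ℝ) i else 0)) := by
    refine ⟨0, ?_⟩
    rintro r ⟨y, rfl⟩
    apply Finset.sum_nonneg
    intro i _
    split
    · exact α.2.1 i
    · exact le_rfl
    
  calc ⨅ y : A, ∑ i, (if x i ≠ (y : ∀ i, X i) i then (α : Fin n → ℝ) i else 0)
      ≤ ∑ i, (if x i ≠ x i then (α : Fin n → ℝ) i else 0) := ciInf_le hb ⟨x, hx⟩
    _ = 0 := by simp

/-- If `Z = d_T(X, A)` satisfies sub-Gaussian tail bounds around its expectation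
`θ = E[Z]`, then `P(X ∈ A) · P(d_T(X, A) ≥ t) ≤ exp(−t²/4)` for all `t ≥ 0`. -/
theorem convexDist_product_inequality {n : ℕ} {X : Fin n → Type*}
    [∀ i, MeasurableSpace (X i)]
    {Ω : Type*} [MeasurableSpace Ω] (ℙ : Measure Ω) [IsProbabilityMeasure ℙ]
    (Xr : Ω → ∀ i, X i) (hXr : Measurable Xr)
    (A : Set (∀ i, X i)) (hAmeas : MeasurableSet A)
    (Z : Ω → ℝ) (hZ : ∀ ω, Z ω = convexDist (Xr ω) A)
    (hZmeas : Measurable Z) (hZint : Integrable Z ℙ)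
    (θ : ℝ) (hθ : θ = ∫ ω, Z ω ∂ℙ)
    (hup : ∀ x : ℝ, 0 ≤ x → (ℙ {ω | x ≤ Z ω - θ}).toReal ≤ Real.exp (-x ^ 2 / 2))
    (hlow : ∀ x : ℝ, 0 ≤ x → (ℙ {ω | x ≤ θ - Z ω}).toReal ≤ Real.exp (-x ^ 2 / 2)) :
    ∀ t : ℝ, 0 ≤ t →
      (ℙ {ω | Xr ω ∈ A}).toReal * (ℙ {ω | t ≤ Z ω}).toReal ≤
        Real.exp (-t ^ 2 / 4) := by
  intro t ht
  have hZnn : ∀ ω, 0 ≤ Z ω := fun ω => (hZ ω) ▸ convexDist_nonneg' (Xr ω) A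
  have hθnn : 0 ≤ θ := hθ ▸ integral_nonneg hZnn
  -- P(X ∈ A) ≤ exp(-θ²/2)
  have hA : (ℙ {ω | Xr ω ∈ A}).toReal ≤ Real.exp (-θ ^ 2 / 2) := by
    refine le_trans ?_ (hlow θ hθnn)
    apply ENNReal.toReal_mono (measure_ne_top _ _)
    apply measure_mono
    intro ω hω
    have h0 : Z ω = 0 :=
      le_antisymm ((hZ ω) ▸ convexDist_le_zero hω) (hZnn ω)
    simp [Set.mem_setOf_eq, h0]
  have hAnn : (0:ℝ) ≤ (ℙ {ω | Xr ω ∈ A}).toReal := ENNReal.toReal_nonneg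
  rcases le_or_gt θ t with hcase | hcase
  · -- t ≥ θ
    have hT : (ℙ {ω | t ≤ Z ω}).toReal ≤ Real.exp (-(t - θ) ^ 2 / 2) := by
      refine le_trans ?_ (hup (t - θ) (by linarith))
      apply ENNReal.toReal_mono (measure_ne_top _ _)
      apply measure_mono
      intro ω hω
      simp only [Set.mem_setOf_eq] at *
      linarith
    calc (ℙ {ω | Xr ω ∈ A}).toReal * (ℙ {ω | t ≤ Z ω}).toReal
        ≤ Real.exp (-θ ^ 2 / 2) * Real.exp (-(t - θ) ^ 2 / 2) :=
          mul_le_mul hA hT ENNReal.toReal_nonneg (Real.exp_nonneg _)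
      _ = Real.exp (-θ ^ 2 / 2 + -(t - θ) ^ 2 / 2) := (Real.exp_add _ _).symm
      _ ≤ Real.exp (-t ^ 2 / 4) := by
          apply Real.exp_le_exp.mpr
          nlinarith [sq_nonneg (t - 2 * θ)]
  · -- t < θ
    have hT : (ℙ {ω | t ≤ Z ω}).toReal ≤ 1 := by
      rw [← ENNReal.toReal_one]
      exact ENNReal.toReal_mono (by simp) prob_le_one
    calc (ℙ {ω | Xr ω ∈ A}).toReal * (ℙ {ω | t ≤ Z ω}).toReal
        ≤ Real.exp (-θ ^ 2 / 2) * 1 := mul_le_mul hA hT ENNReal.toReal_nonneg (Real.exp_nonneg _)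
      _ = Real.exp (-θ ^ 2 / 2) := mul_one _
      _ ≤ Real.exp (-t ^ 2 / 4) := by
          apply Real.exp_le_exp.mpr
          nlinarith
end

section
/- Let B be a subset of the closed unit Euclidean ball of ℝ^n, ε_1,…,ε_n independent Rademacher variables, and Z = sup_{b ∈ B} ⟨b, ε⟩. Then Var(Z) ≤ 2. -/
/-!
Almost surely `ε = σ(s)`, where `s ∈ {0,1}ⁿ` is the sign pattern of `ε`, uniformly distributed
by independence, and `σ(t)` is the `±1`-vector of `t`. Hence `Z = g(s)` a.s. with
`g(t) = sup_{b ∈ B} ⟨b, σ(t)⟩`. On the uniform Boolean cube the Efron–Stein inequality reads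
`Var g ≤ ¼ ∑ᵢ E (g - g ∘ flipᵢ)²`, and since `flipᵢ` is a measure-preserving involution this is
`½ E ∑ᵢ (g - g ∘ flipᵢ)₊²`. If `b₀ ∈ B` attains the supremum at `t`, then
`g(t) - g(flipᵢ t) ≤ ⟨b₀, σ(t) - σ(flipᵢ t)⟩ = ±2 b₀ᵢ`, so the inner sum is at most
`4 ‖b₀‖² ≤ 4`.
-/

open Finset MeasureTheory ProbabilityTheory
open scoped ENNReal

lemma sq_eq_posPart_sq_add_posPart_neg_sq (a : ℝ) : a ^ 2 = a⁺ ^ 2 + (-a)⁺ ^ 2 := by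
  rcases le_total a 0 with h | h
  · simp [posPart_eq_zero.2 h, posPart_eq_self.2 (neg_nonneg.2 h)]
  · simp [posPart_eq_self.2 h, posPart_eq_zero.2 (neg_nonpos.2 h)]

lemma posPart_sq_le_sq_of_le {a b : ℝ} (h : a ≤ b) : a⁺ ^ 2 ≤ b ^ 2 := by
  have hab : a⁺ ≤ |b| := by
    rw [posPart_def]
    exact sup_le (h.trans (le_abs_self b)) (abs_nonneg b)
  rw [← sq_abs b]
  exact pow_le_pow_left₀ (posPart_nonneg a) hab 2

section BooleanCube

variable {ι : Type*} [DecidableEq ι] {n : ℕ}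

def flipCoord (i : ι) (x : ι → Bool) : ι → Bool := Function.update x i (!x i)

lemma flipCoord_involutive (i : ι) : Function.Involutive (flipCoord i) := by
  intro x
  ext j
  rcases eq_or_ne j i with rfl | hj <;> simp [flipCoord, Function.update_of_ne, *]

lemma flipCoord_zero_cons (b : Bool) (y : Fin n → Bool) :
    flipCoord 0 (Fin.cons b y : Fin (n + 1) → Bool) = Fin.cons (!b) y := by
  simp [flipCoord, Fin.update_cons_zero]

lemma flipCoord_succ_cons (i : Fin n) (b : Bool) (y : Fin n → Bool) :
    flipCoord i.succ (Fin.cons b y : Fin (n + 1) → Bool) = Fin.cons b (flipCoord i y) := by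
  simp [flipCoord, Fin.cons_update]

lemma sum_boolCube_succ {M : Type*} [AddCommMonoid M] (F : (Fin (n + 1) → Bool) → M) :
    ∑ x, F x = ∑ y, (F (Fin.cons false y) + F (Fin.cons true y)) := by
  rw [← (Fin.consEquiv fun _ : Fin (n + 1) ↦ Bool).sum_comp F, Fintype.sum_prod_type,
    Fintype.sum_bool, add_comm, ← sum_add_distrib]
  rfl

def boolCubeEnergy (g : (Fin n → Bool) → ℝ) : ℝ :=
  ∑ i, ∑ x, (g x - g (flipCoord i x)) ^ 2

lemma boolCubeEnergy_succ (g : (Fin (n + 1) → Bool) → ℝ) :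
    boolCubeEnergy g = 2 * ∑ y, (g (Fin.cons false y) - g (Fin.cons true y)) ^ 2
      + boolCubeEnergy (fun y ↦ g (Fin.cons false y))
      + boolCubeEnergy (fun y ↦ g (Fin.cons true y)) := by
  rw [boolCubeEnergy, Fin.sum_univ_succ, add_assoc, boolCubeEnergy, boolCubeEnergy,
    ← sum_add_distrib]
  congr 1
  · rw [sum_boolCube_succ, mul_sum]
    refine sum_congr rfl fun y _ ↦ ?_
    simp only [flipCoord_zero_cons, Bool.not_false, Bool.not_true]
    ring
  · refine sum_congr rfl fun i _ ↦ ?_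
    rw [sum_boolCube_succ, sum_add_distrib]
    simp only [flipCoord_succ_cons]

lemma boolCubeEnergy_add_le (g h : (Fin n → Bool) → ℝ) :
    boolCubeEnergy (g + h) ≤ 2 * (boolCubeEnergy g + boolCubeEnergy h) := by
  simp only [boolCubeEnergy, ← sum_add_distrib, mul_sum]
  gcongr with i _ x _
  simp only [Pi.add_apply]
  nlinarith [sq_nonneg (g x - g (flipCoord i x) - (h x - h (flipCoord i x)))]

/-- Efron–Stein for the uniform measure on the cube, `Var g ≤ ¼ ∑ᵢ E (g - g ∘ flipᵢ)²`,
multiplied by `4 ^ (n + 1)`. -/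
theorem efronStein_boolCube (g : (Fin n → Bool) → ℝ) :
    4 * (2 ^ n * ∑ x, g x ^ 2 - (∑ x, g x) ^ 2) ≤ 2 ^ n * boolCubeEnergy g := by
  induction n with
  | zero => simp [boolCubeEnergy]
  | succ n ih =>
    set g₀ : (Fin n → Bool) → ℝ := fun y ↦ g (Fin.cons false y)
    set g₁ : (Fin n → Bool) → ℝ := fun y ↦ g (Fin.cons true y)
    have hmean := ih (g₀ + g₁)
    have henergy := boolCubeEnergy_add_le g₀ g₁
    have hparallelogram : ∑ y, (g₀ y + g₁ y) ^ 2 + ∑ y, (g₀ y - g₁ y) ^ 2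
        = 2 * (∑ y, g₀ y ^ 2 + ∑ y, g₁ y ^ 2) := by
      simp only [← sum_add_distrib, mul_sum]
      exact sum_congr rfl fun y _ ↦ by ring
    simp only [Pi.add_apply, sum_add_distrib] at hmean
    rw [boolCubeEnergy_succ, sum_boolCube_succ (fun x ↦ g x ^ 2), sum_boolCube_succ g,
      sum_add_distrib, sum_add_distrib, pow_succ]
    have h2n : (0 : ℝ) ≤ 2 ^ n := by positivity
    linear_combination hmean + mul_le_mul_of_nonneg_left henergy h2n - 4 * 2 ^ n * hparallelogram

lemma sum_sq_sub_flipCoord [Fintype ι] (g : (ι → Bool) → ℝ) (i : ι) :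
    ∑ x, (g x - g (flipCoord i x)) ^ 2 = 2 * ∑ x, (g x - g (flipCoord i x))⁺ ^ 2 := by
  have hswap : ∑ x, (-(g x - g (flipCoord i x)))⁺ ^ 2 = ∑ x, (g x - g (flipCoord i x))⁺ ^ 2 :=
    Fintype.sum_equiv (flipCoord_involutive i).toPerm _ _ fun x ↦ by
      simp [flipCoord_involutive i x]
  simp_rw [sq_eq_posPart_sq_add_posPart_neg_sq (g _ - g _), sum_add_distrib, hswap]
  ring

theorem boolCube_variance_le (g : (Fin n → Bool) → ℝ) {c : ℝ}
    (hg : ∀ x, ∑ i, (g x - g (flipCoord i x))⁺ ^ 2 ≤ c) :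
    (2 ^ n)⁻¹ * ∑ x, g x ^ 2 - ((2 ^ n)⁻¹ * ∑ x, g x) ^ 2 ≤ c / 2 := by
  have henergy : boolCubeEnergy g ≤ 2 * 2 ^ n * c :=
    calc boolCubeEnergy g = 2 * ∑ x, ∑ i, (g x - g (flipCoord i x))⁺ ^ 2 := by
          simp only [boolCubeEnergy, sum_sq_sub_flipCoord, ← mul_sum, sum_comm (γ := Fin n)]
      _ ≤ 2 * ∑ _x : Fin n → Bool, c := by gcongr with x; exact hg x
      _ = 2 * 2 ^ n * c := by simp; ring
  have hscaled : 4 * (2 ^ n * ∑ x, g x ^ 2 - (∑ x, g x) ^ 2) ≤ 2 ^ n * (2 * 2 ^ n * c) :=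
    (efronStein_boolCube g).trans (mul_le_mul_of_nonneg_left henergy (by positivity))
  field_simp
  linarith

end BooleanCube

section SupportFunction

variable {ι : Type*}

noncomputable def supportFunction [Fintype ι] (B : Set (ι → ℝ)) (x : ι → ℝ) : ℝ :=
  ⨆ b : B, (b : ι → ℝ) ⬝ᵥ x

lemma exists_mem_forall_supportFunction_sub_le [Fintype ι] {B : Set (ι → ℝ)}
    (hBne : B.Nonempty) (hB : IsCompact B) (x : ι → ℝ) :
    ∃ b₀ ∈ B, ∀ y, supportFunction B x - supportFunction B y ≤ b₀ ⬝ᵥ (x - y) := by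
  have hcont (z : ι → ℝ) : Continuous fun b : ι → ℝ ↦ b ⬝ᵥ z :=
    continuous_id.dotProduct continuous_const
  obtain ⟨b₀, hb₀, hmax⟩ := hB.exists_isMaxOn hBne (hcont x).continuousOn
  have : Nonempty B := hBne.to_subtype
  refine ⟨b₀, hb₀, fun y ↦ ?_⟩
  have hx : supportFunction B x ≤ b₀ ⬝ᵥ x := ciSup_le fun b ↦ hmax b.2
  have hy : b₀ ⬝ᵥ y ≤ supportFunction B y := by
    have hbdd := hB.bddAbove_image (hcont y).continuousOn
    rw [Set.image_eq_range] at hbdd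
    exact le_ciSup hbdd ⟨b₀, hb₀⟩
  rw [dotProduct_sub]
  linarith

end SupportFunction

section SignVectors

variable {ι : Type*}

def signVec (t : ι → Bool) : ι → ℝ := fun i ↦ if t i then 1 else -1

lemma signVec_sub_signVec_flipCoord [DecidableEq ι] (t : ι → Bool) (i : ι) :
    signVec t - signVec (flipCoord i t) = Pi.single i (2 * signVec t i) := by
  ext j
  rcases eq_or_ne j i with rfl | hj
  · cases h : t j <;> simp [signVec, flipCoord, h] <;> norm_num
  · simp [signVec, flipCoord, hj]

lemma signVec_sq (t : ι → Bool) (i : ι) : signVec t i ^ 2 = 1 := by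
  cases t i <;> simp [signVec]

lemma sum_posPart_supportFunction_sub_flipCoord_sq_le [Fintype ι] [DecidableEq ι]
    {B : Set (ι → ℝ)} (hBne : B.Nonempty) (hB : IsCompact B) (hB₁ : ∀ b ∈ B, ∑ i, b i ^ 2 ≤ 1)
    (t : ι → Bool) :
    ∑ i, (supportFunction B (signVec t) - supportFunction B (signVec (flipCoord i t)))⁺ ^ 2
      ≤ 4 := by
  obtain ⟨b₀, hb₀, hsub⟩ := exists_mem_forall_supportFunction_sub_le hBne hB (signVec t)
  have hcoord (i : ι) : (supportFunction B (signVec t)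
      - supportFunction B (signVec (flipCoord i t)))⁺ ^ 2 ≤ 4 * b₀ i ^ 2 := by
    have h := hsub (signVec (flipCoord i t))
    rw [signVec_sub_signVec_flipCoord, dotProduct_single] at h
    calc _ ≤ (b₀ i * (2 * signVec t i)) ^ 2 := posPart_sq_le_sq_of_le h
      _ = 4 * b₀ i ^ 2 := by rw [mul_pow, mul_pow, signVec_sq]; ring
  calc _ ≤ ∑ i, 4 * b₀ i ^ 2 := sum_le_sum fun i _ ↦ hcoord i
    _ ≤ 4 := by rw [← mul_sum]; linarith [hB₁ b₀ hb₀]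

noncomputable def signPattern {Ω : Type*} (ε : ι → Ω → ℝ) (ω : Ω) : ι → Bool :=
  fun i ↦ decide (ε i ω = 1)

lemma signVec_signPattern {Ω : Type*} {ε : ι → Ω → ℝ} {ω : Ω}
    (h : ∀ i, ε i ω = 1 ∨ ε i ω = -1) :
    signVec (signPattern ε ω) = fun i ↦ ε i ω := by
  ext i
  rcases h i with h | h <;> norm_num [signVec, signPattern, h]

end SignVectors

section UniformLaw

variable {Ω α : Type*} [MeasurableSpace Ω] {P : Measure Ω} [IsProbabilityMeasure P]
  [Fintype α] [MeasurableSpace α] [MeasurableSingletonClass α] {s : Ω → α}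

lemma integral_comp_of_measure_preimage_singleton (hs : Measurable s)
    (hunif : ∀ t, P (s ⁻¹' {t}) = (Fintype.card α : ℝ≥0∞)⁻¹) (F : α → ℝ) :
    ∫ ω, F (s ω) ∂P = (Fintype.card α : ℝ)⁻¹ * ∑ t, F t := by
  have : IsProbabilityMeasure (P.map s) := Measure.isProbabilityMeasure_map hs.aemeasurable
  rw [← integral_map hs.aemeasurable (measurable_of_countable F).aestronglyMeasurable,
    integral_fintype .of_finite, mul_sum]
  refine sum_congr rfl fun t _ ↦ ?_
  rw [measureReal_def, Measure.map_apply hs (measurableSet_singleton t), hunif, smul_eq_mul]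
  simp

lemma variance_comp_of_measure_preimage_singleton (hs : Measurable s)
    (hunif : ∀ t, P (s ⁻¹' {t}) = (Fintype.card α : ℝ≥0∞)⁻¹) (F : α → ℝ) :
    variance (F ∘ s) P
      = (Fintype.card α : ℝ)⁻¹ * ∑ t, F t ^ 2 - ((Fintype.card α : ℝ)⁻¹ * ∑ t, F t) ^ 2 := by
  have hF : MemLp F 2 (P.map s) := .of_discrete
  rw [variance_eq_sub (hF.comp_of_map hs.aemeasurable)]
  simp only [Pi.pow_apply, Function.comp_apply]
  rw [integral_comp_of_measure_preimage_singleton hs hunif (F · ^ 2),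
    integral_comp_of_measure_preimage_singleton hs hunif F]

end UniformLaw

section Rademacher

variable {Ω : Type*} [MeasurableSpace Ω] {P : Measure Ω} [IsProbabilityMeasure P] {X : Ω → ℝ}

lemma ae_eq_one_or_eq_neg_one (hX : Measurable X) (h₁ : P {ω | X ω = 1} = 1 / 2)
    (h₂ : P {ω | X ω = -1} = 1 / 2) : ∀ᵐ ω ∂P, X ω = 1 ∨ X ω = -1 := by
  have hdisj : Disjoint {ω | X ω = 1} {ω | X ω = -1} :=
    Set.disjoint_left.2 fun ω (h₁ : X ω = 1) (h₂ : X ω = -1) ↦ by norm_num [h₁] at h₂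
  have hmeas : MeasurableSet ({ω | X ω = 1} ∪ {ω | X ω = -1}) :=
    (hX (measurableSet_singleton 1)).union (hX (measurableSet_singleton (-1)))
  rw [ae_iff_measure_eq (p := fun ω ↦ X ω = 1 ∨ X ω = -1) hmeas.nullMeasurableSet, measure_univ,
    Set.ofPred_or, measure_union hdisj (hX (measurableSet_singleton (-1))), h₁, h₂,
    ENNReal.add_halves]

lemma measure_decide_eq_one_eq_half (hX : Measurable X) (h₁ : P {ω | X ω = 1} = 1 / 2)
    (b : Bool) : P {ω | decide (X ω = 1) = b} = 2⁻¹ := by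
  cases b
  · have hcompl : {ω | decide (X ω = 1) = false} = {ω | X ω = 1}ᶜ := by ext; simp
    rw [hcompl, prob_compl_eq_one_sub (s := {ω | X ω = 1}) (hX (measurableSet_singleton 1)), h₁,
      one_div, ENNReal.one_sub_inv_two]
  · simpa using h₁

lemma measurable_decide_eq_one : Measurable fun y : ℝ ↦ decide (y = 1) :=
  measurable_to_bool <| by simp [Set.preimage]

variable {ι : Type*}

lemma measurable_signPattern {ε : ι → Ω → ℝ} (hmeas : ∀ i, Measurable (ε i)) :
    Measurable (signPattern ε) :=
  measurable_pi_lambda _ fun i ↦ measurable_decide_eq_one.comp (hmeas i)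

lemma measure_signPattern_preimage [Fintype ι] [DecidableEq ι] {ε : ι → Ω → ℝ}
    (hmeas : ∀ i, Measurable (ε i)) (hind : iIndepFun ε P) (h₁ : ∀ i, P {ω | ε i ω = 1} = 1 / 2)
    (t : ι → Bool) :
    P (signPattern ε ⁻¹' {t}) = (Fintype.card (ι → Bool) : ℝ≥0∞)⁻¹ := by
  have hset : signPattern ε ⁻¹' {t} = ⋂ i, ε i ⁻¹' ((decide <| · = 1) ⁻¹' {t i}) := by
    ext ω
    simp [signPattern, funext_iff]
  rw [hset,
    hind.meas_iInter fun i ↦ ⟨_, measurable_decide_eq_one (measurableSet_singleton _), rfl⟩]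
  calc ∏ i, P (ε i ⁻¹' ((decide <| · = 1) ⁻¹' {t i})) = ∏ _i : ι, (2 : ℝ≥0∞)⁻¹ :=
        prod_congr rfl fun i _ ↦ measure_decide_eq_one_eq_half (hmeas i) (h₁ i) (t i)
    _ = (Fintype.card (ι → Bool) : ℝ≥0∞)⁻¹ := by simp [ENNReal.inv_pow]

end Rademacher

/-- The variance of the supremum of a Rademacher process over a subset of the
closed unit Euclidean ball is at most `2`. -/
theorem rademacher_sup_variance_le_two {n : ℕ}
    {Ω : Type*} [MeasurableSpace Ω] (P : Measure Ω) [IsProbabilityMeasure P]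
    (ε : Fin n → Ω → ℝ) (hmeas : ∀ i, Measurable (ε i))
    (hind : iIndepFun ε P)
    (hrad : ∀ i, P {ω | ε i ω = 1} = 1/2 ∧ P {ω | ε i ω = -1} = 1/2)
    (B : Set (Fin n → ℝ)) (hBne : B.Nonempty) (hBcomp : IsCompact B)
    (hB : ∀ b ∈ B, ∑ i, (b i) ^ 2 ≤ 1)
    (Z : Ω → ℝ) (hZ : ∀ ω, Z ω = ⨆ b : B, ∑ i, (b : Fin n → ℝ) i * ε i ω) :
    variance Z P ≤ 2 := by
  let g : (Fin n → Bool) → ℝ := fun t ↦ supportFunction B (signVec t)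
  have hZ_ae : Z =ᵐ[P] g ∘ signPattern ε := by
    filter_upwards [ae_all_iff.2 fun i ↦ ae_eq_one_or_eq_neg_one (hmeas i) (hrad i).1 (hrad i).2]
      with ω hω
    exact (hZ ω).trans (congrArg (supportFunction B) (signVec_signPattern hω).symm)
  have hlaw := measure_signPattern_preimage hmeas hind fun i ↦ (hrad i).1
  rw [variance_congr hZ_ae,
    variance_comp_of_measure_preimage_singleton (measurable_signPattern hmeas) hlaw]
  have hcube := boolCube_variance_le g fun t ↦
    sum_posPart_supportFunction_sub_flipCoord_sq_le hBne hBcomp hB t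
  norm_num [Fintype.card_fun] at hcube ⊢
  exact hcube
end

section
/- Let φ_1,…,φ_D be orthonormal vectors in ℝ^n and ε a vector of n independent Rademacher variables. Define χ = (∑_{j=1}^D ⟨ε, φ_j⟩²)^{1/2}. Then D − 2 ≤ (E[χ])² ≤ D. -/
/-!
Write `χ = √S` with `S = ‖Φ ε‖² = εᵀ B ε`, where `Φ` has rows `φ_j` and `B = ΦᵀΦ` is the
orthogonal projection onto their span. Since `ε_i² = 1`, `S = tr B + ∑_{i ≠ i'} B_{ii'} ε_i ε_{i'}`,
and the products `ε_i ε_{i'}` (`i ≠ i'`) are orthonormal up to the symmetry `{i, i'}`; hence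
`E S = tr B = D` and `Var S = 2 ∑_{i ≠ i'} B_{ii'}² ≤ 2 ‖B‖_F² = 2 D`. Jensen gives
`(E χ)² ≤ E S = D`. Conversely `|√s - √D| ≤ |s - D| / √D`, so
`D - (E χ)² = Var χ ≤ E (χ - √D)² ≤ Var S / D ≤ 2`.
-/

open MeasureTheory ProbabilityTheory Matrix

theorem sqrt_sub_sqrt_sq_mul_le {s m : ℝ} (hs : 0 ≤ s) (hm : 0 ≤ m) :
    (√s - √m) ^ 2 * m ≤ (s - m) ^ 2 := by
  have hsum : √m ^ 2 ≤ (√s + √m) ^ 2 := by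
    gcongr; exact le_add_of_nonneg_left (Real.sqrt_nonneg s)
  calc (√s - √m) ^ 2 * m = (√s - √m) ^ 2 * √m ^ 2 := by rw [Real.sq_sqrt hm]
    _ ≤ (√s - √m) ^ 2 * (√s + √m) ^ 2 := by gcongr
    _ = (s - m) ^ 2 := by
        rw [← mul_pow, mul_comm, ← sq_sub_sq, Real.sq_sqrt hs, Real.sq_sqrt hm]

theorem Finset.sum_offDiag_ite_sym2_eq {ι M : Type*} [DecidableEq ι] [AddCommMonoid M]
    {s : Finset ι} {p : ι × ι} (hp : p ∈ s.offDiag) (f : ι × ι → M) :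
    ∑ q ∈ s.offDiag, (if s(p.1, p.2) = s(q.1, q.2) then f q else 0) = f p + f p.swap := by
  obtain ⟨hp1, hp2, hne⟩ := Finset.mem_offDiag.1 hp
  have hfilter : {q ∈ s.offDiag | s(p.1, p.2) = s(q.1, q.2)} = {p, p.swap} := by
    ext ⟨a, b⟩
    simp only [Finset.mem_filter, Finset.mem_offDiag, Sym2.eq_iff, Finset.mem_insert,
      Finset.mem_singleton, Prod.ext_iff, Prod.fst_swap, Prod.snd_swap]
    grind
  rw [← Finset.sum_filter, hfilter, Finset.sum_pair]
  exact fun h => hne (congrArg Prod.fst h)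

theorem Finset.sum_offDiag_le_sum_sum {ι : Type*} [Fintype ι] {f : ι → ι → ℝ}
    (hf : ∀ i j, 0 ≤ f i j) : ∑ p ∈ Finset.univ.offDiag, f p.1 p.2 ≤ ∑ i, ∑ j, f i j := by
  rw [← Finset.sum_product', Finset.univ_product_univ]
  exact Finset.sum_le_sum_of_subset_of_nonneg (Finset.subset_univ _) fun p _ _ => hf p.1 p.2

section QuadraticForm

variable {ι R : Type*} [Fintype ι]

def offDiagForm [CommSemiring R] (B : Matrix ι ι R) (x : ι → R) : R :=
  ∑ p ∈ Finset.univ.offDiag, B p.1 p.2 * (x p.1 * x p.2)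

theorem dotProduct_mulVec_eq_trace_add_offDiagForm [DecidableEq ι] [CommSemiring R]
    (B : Matrix ι ι R) {x : ι → R} (hx : ∀ i, x i * x i = 1) :
    x ⬝ᵥ B *ᵥ x = B.trace + offDiagForm B x := by
  have hfull : x ⬝ᵥ B *ᵥ x = ∑ p ∈ Finset.univ ×ˢ Finset.univ, B p.1 p.2 * (x p.1 * x p.2) := by
    rw [Finset.sum_product]
    simp only [dotProduct, mulVec, Finset.mul_sum]
    exact Finset.sum_congr rfl fun i _ => Finset.sum_congr rfl fun j _ => by ring
  rw [hfull, ← Finset.diag_union_offDiag, Finset.sum_union (Finset.disjoint_diag_offDiag _),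
    Finset.sum_diag]
  simp [hx, trace, offDiagForm]

end QuadraticForm

namespace Matrix

variable {m n : Type*} [Fintype m] [Fintype n]

theorem dotProduct_transpose_mul_self_mulVec {R : Type*} [CommSemiring R] (Φ : Matrix m n R)
    (x : n → R) : x ⬝ᵥ (Φᵀ * Φ) *ᵥ x = (Φ *ᵥ x) ⬝ᵥ (Φ *ᵥ x) := by
  rw [← mulVec_mulVec, dotProduct_mulVec, vecMul_transpose]

theorem trace_transpose_mul_self_of_mul_transpose_eq_one [DecidableEq m] {Φ : Matrix m n ℝ}
    (h : Φ * Φᵀ = 1) : (Φᵀ * Φ).trace = Fintype.card m := by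
  rw [trace_mul_comm, h, trace_one]

theorem sum_sq_transpose_mul_self_of_mul_transpose_eq_one [DecidableEq m] {Φ : Matrix m n ℝ}
    (h : Φ * Φᵀ = 1) : ∑ i, ∑ j, (Φᵀ * Φ) i j ^ 2 = Fintype.card m := by
  have hidem : Φᵀ * Φ * (Φᵀ * Φ) = Φᵀ * Φ := by
    rw [Matrix.mul_assoc, ← Matrix.mul_assoc Φ, h, Matrix.one_mul]
  have hsymm : (Φᵀ * Φ)ᵀ = Φᵀ * Φ := by rw [transpose_mul, transpose_transpose]
  calc ∑ i, ∑ j, (Φᵀ * Φ) i j ^ 2 = (Φᵀ * Φ * (Φᵀ * Φ)).trace := by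
        simp only [trace, diag_apply, mul_apply (M := Φᵀ * Φ), sq]
        refine Finset.sum_congr rfl fun i _ => Finset.sum_congr rfl fun j _ => ?_
        rw [← hsymm, transpose_apply, hsymm]
    _ = Fintype.card m := by rw [hidem, trace_transpose_mul_self_of_mul_transpose_eq_one h]

end Matrix

def IsRademacher {Ω : Type*} [MeasurableSpace Ω] (X : Ω → ℝ) (P : Measure Ω) : Prop :=
  P {ω | X ω = 1} = 1 / 2 ∧ P {ω | X ω = -1} = 1 / 2

section

variable {Ω : Type*} [MeasurableSpace Ω] {P : Measure Ω}

theorem memLp_two_sqrt {S : Ω → ℝ} (hS0 : 0 ≤ᵐ[P] S) (hS : Integrable S P) :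
    MemLp (fun ω => √(S ω)) 2 P := by
  refine (memLp_two_iff_integrable_sq
    (Real.continuous_sqrt.comp_aestronglyMeasurable hS.aestronglyMeasurable)).2 ?_
  refine hS.congr ?_
  filter_upwards [hS0] with ω hω using (Real.sq_sqrt hω).symm

theorem integral_sqrt_sq {S : Ω → ℝ} (hS0 : 0 ≤ᵐ[P] S) :
    ∫ ω, ((fun ω => √(S ω)) ^ 2) ω ∂P = ∫ ω, S ω ∂P :=
  integral_congr_ae (by filter_upwards [hS0] with ω hω using Real.sq_sqrt hω)

variable [IsProbabilityMeasure P]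

theorem sq_integral_sqrt_le_integral {S : Ω → ℝ} (hS0 : 0 ≤ᵐ[P] S) (hS : Integrable S P) :
    (∫ ω, √(S ω) ∂P) ^ 2 ≤ ∫ ω, S ω ∂P := by
  have hvar := variance_eq_sub (memLp_two_sqrt hS0 hS)
  rw [integral_sqrt_sq hS0] at hvar
  linarith [variance_nonneg (fun ω => √(S ω)) P]

theorem integral_sub_variance_div_le_sq_integral_sqrt {S : Ω → ℝ} (hS0 : 0 ≤ᵐ[P] S)
    (hS : MemLp S 2 P) :
    ∫ ω, S ω ∂P - Var[S; P] / ∫ ω, S ω ∂P ≤ (∫ ω, √(S ω) ∂P) ^ 2 := by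
  set m := ∫ ω, S ω ∂P
  have hm : 0 ≤ m := integral_nonneg_of_ae hS0
  rcases hm.eq_or_lt with hm0 | hmpos
  · rw [← hm0]; simp only [div_zero, sub_zero]; positivity
  have hsqrt := memLp_two_sqrt hS0 (hS.integrable one_le_two)
  have hshift : MemLp (fun ω => √(S ω) - √m) 2 P := hsqrt.sub (memLp_const _)
  calc m - Var[S; P] / m
      = m - (∫ ω, (S ω - m) ^ 2 ∂P) / m := by
        rw [variance_eq_integral hS.aestronglyMeasurable.aemeasurable]
    _ ≤ m - ∫ ω, (√(S ω) - √m) ^ 2 ∂P := by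
        gcongr
        rw [le_div_iff₀ hmpos, ← integral_mul_const]
        refine integral_mono_ae (hshift.integrable_sq.mul_const m) ?_ ?_
        · exact (hS.sub (memLp_const m)).integrable_sq
        · filter_upwards [hS0] with ω hω using sqrt_sub_sqrt_sq_mul_le hω hm
    _ ≤ m - Var[fun ω => √(S ω) - √m; P] := by
        gcongr
        exact variance_le_expectation_sq hshift.aestronglyMeasurable
    _ = (∫ ω, √(S ω) ∂P) ^ 2 := by
        rw [variance_sub_const hsqrt.aestronglyMeasurable, variance_eq_sub hsqrt,
          integral_sqrt_sq hS0]
        ring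

namespace IsRademacher

variable {X : Ω → ℝ}

theorem ae_eq_one_or_eq_neg_one (h : IsRademacher X P) (hX : Measurable X) :
    ∀ᵐ ω ∂P, X ω = 1 ∨ X ω = -1 := by
  have hneg : MeasurableSet {ω | X ω = -1} := hX (measurableSet_singleton _)
  have hdisj : Disjoint {ω | X ω = 1} {ω | X ω = -1} :=
    Set.disjoint_left.2 fun ω h1 h2 => by norm_num [Set.mem_ofPred_eq ▸ h1] at h2
  have : P ({ω | X ω = 1} ∪ {ω | X ω = -1}) = 1 := by
    rw [measure_union hdisj hneg, h.1, h.2, ENNReal.add_halves]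
  exact (mem_ae_iff_prob_eq_one ((hX (measurableSet_singleton _)).union hneg)).2 this

theorem ae_sq_eq_one (h : IsRademacher X P) (hX : Measurable X) : ∀ᵐ ω ∂P, X ω ^ 2 = 1 := by
  filter_upwards [h.ae_eq_one_or_eq_neg_one hX] with ω hω
  rcases hω with hω | hω <;> simp [hω]

theorem ae_abs_le_one (h : IsRademacher X P) (hX : Measurable X) : ∀ᵐ ω ∂P, |X ω| ≤ 1 := by
  filter_upwards [h.ae_eq_one_or_eq_neg_one hX] with ω hω
  rcases hω with hω | hω <;> simp [hω]

theorem integral_eq_zero (h : IsRademacher X P) (hX : Measurable X) : ∫ ω, X ω ∂P = 0 := by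
  have hpos : MeasurableSet {ω | X ω = 1} := hX (measurableSet_singleton _)
  have hneg : MeasurableSet {ω | X ω = -1} := hX (measurableSet_singleton _)
  have hsplit : X =ᵐ[P] fun ω => {ω | X ω = 1}.indicator 1 ω - {ω | X ω = -1}.indicator 1 ω := by
    filter_upwards [h.ae_eq_one_or_eq_neg_one hX] with ω hω
    rcases hω with hω | hω <;> norm_num [Set.indicator_apply, hω]
  rw [integral_congr_ae hsplit, integral_sub ((integrable_const 1).indicator hpos)
    ((integrable_const 1).indicator hneg), integral_indicator_one hpos,
    integral_indicator_one hneg, measureReal_def, measureReal_def, h.1, h.2, sub_self]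

end IsRademacher

section RademacherFamily

variable {ι : Type*} {ε : ι → Ω → ℝ}
  (hmeas : ∀ i, Measurable (ε i)) (hrad : ∀ i, IsRademacher (ε i) P)
include hmeas hrad

theorem memLp_mul_of_isRademacher (i j : ι) (p : ENNReal) :
    MemLp (fun ω => ε i ω * ε j ω) p P := by
  refine MemLp.of_bound ((hmeas i).mul (hmeas j)).aestronglyMeasurable 1 ?_
  filter_upwards [(hrad i).ae_abs_le_one (hmeas i), (hrad j).ae_abs_le_one (hmeas j)]
    with ω hi hj
  rw [Real.norm_eq_abs, abs_mul]
  exact mul_le_one₀ hi (abs_nonneg _) hj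

variable (hind : iIndepFun ε P)
include hind

theorem integral_mul_eq_zero_of_ne {i j : ι} (hij : i ≠ j) : ∫ ω, ε i ω * ε j ω ∂P = 0 := by
  have h := (hind.indepFun hij).integral_mul_eq_mul_integral
    (hmeas i).aestronglyMeasurable (hmeas j).aestronglyMeasurable
  simp only [Pi.mul_apply] at h
  rw [h, (hrad i).integral_eq_zero (hmeas i), zero_mul]

theorem integral_mul_mul_mul_eq_zero [DecidableEq ι] {i j k l : ι}
    (hl : l ∉ ({i, j, k} : Finset ι)) : ∫ ω, ε i ω * ε j ω * ε k ω * ε l ω ∂P = 0 := by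
  let S : Finset ι := {i, j, k}
  have hi : i ∈ S := by simp [S]
  have hj : j ∈ S := by simp [S]
  have hk : k ∈ S := by simp [S]
  have h := ((hind.indepFun_finset S {l} (Finset.disjoint_singleton_right.2 hl) hmeas).comp
    (φ := fun x => x ⟨i, hi⟩ * x ⟨j, hj⟩ * x ⟨k, hk⟩)
    (ψ := fun y => y ⟨l, Finset.mem_singleton_self l⟩) (by fun_prop) (by fun_prop)
    ).integral_mul_eq_mul_integral (by fun_prop) (by fun_prop)
  simp only [Function.comp_def, Pi.mul_apply] at h
  rw [h, (hrad l).integral_eq_zero (hmeas l), mul_zero]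

theorem integral_mul_mul_mul_eq_ite [DecidableEq ι] {i j k l : ι} (hij : i ≠ j) (hkl : k ≠ l) :
    ∫ ω, ε i ω * ε j ω * (ε k ω * ε l ω) ∂P = if s(i, j) = s(k, l) then 1 else 0 := by
  split_ifs with h
  · have hone : ∀ᵐ ω ∂P, ε i ω * ε j ω * (ε k ω * ε l ω) = 1 := by
      filter_upwards [(hrad i).ae_sq_eq_one (hmeas i), (hrad j).ae_sq_eq_one (hmeas j)]
        with ω hi hj
      rcases Sym2.eq_iff.1 h with ⟨rfl, rfl⟩ | ⟨rfl, rfl⟩ <;> linear_combination ε j ω ^ 2 * hi + hj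
    simp [integral_congr_ae hone]
  · -- some index occurs exactly once among `i, j, k, l`
    have hsingle : l ∉ ({i, j, k} : Finset ι) ∨ k ∉ ({i, j, l} : Finset ι) := by
      by_contra! hcon
      simp only [Finset.mem_insert, Finset.mem_singleton] at hcon
      grind [Sym2.eq_iff]
    rcases hsingle with hl | hk
    · rw [← integral_mul_mul_mul_eq_zero hmeas hrad hind hl]
      congr 1; ext ω; ring
    · rw [← integral_mul_mul_mul_eq_zero hmeas hrad hind hk]
      congr 1; ext ω; ring

end RademacherFamily

section RademacherChaos

variable {ι : Type*} [Fintype ι] {ε : ι → Ω → ℝ}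
  (hmeas : ∀ i, Measurable (ε i)) (hrad : ∀ i, IsRademacher (ε i) P)
include hmeas hrad

theorem memLp_offDiagForm (B : Matrix ι ι ℝ) (p : ENNReal) :
    MemLp (fun ω => offDiagForm B (ε · ω)) p P := by
  simp only [offDiagForm]
  exact memLp_finsetSum _ fun (q : ι × ι) _ =>
    (memLp_mul_of_isRademacher hmeas hrad q.1 q.2 p).const_mul _

theorem ae_dotProduct_mulVec_eq_trace_add_offDiagForm [DecidableEq ι] (B : Matrix ι ι ℝ) :
    (fun ω => (ε · ω) ⬝ᵥ B *ᵥ (ε · ω)) =ᵐ[P] fun ω => B.trace + offDiagForm B (ε · ω) := by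
  filter_upwards [ae_all_iff.2 fun i => (hrad i).ae_sq_eq_one (hmeas i)] with ω hω
  exact dotProduct_mulVec_eq_trace_add_offDiagForm B fun i => by rw [← sq, hω i]

theorem memLp_dotProduct_mulVec_of_isRademacher [DecidableEq ι] (B : Matrix ι ι ℝ)
    (p : ENNReal) : MemLp (fun ω => (ε · ω) ⬝ᵥ B *ᵥ (ε · ω)) p P :=
  ((memLp_const B.trace).add (memLp_offDiagForm hmeas hrad B p)).ae_eq
    (ae_dotProduct_mulVec_eq_trace_add_offDiagForm hmeas hrad B).symm

variable (hind : iIndepFun ε P)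
include hind

theorem integral_offDiagForm (B : Matrix ι ι ℝ) : ∫ ω, offDiagForm B (ε · ω) ∂P = 0 := by
  simp only [offDiagForm]
  rw [integral_finsetSum _ fun q _ =>
    ((memLp_mul_of_isRademacher hmeas hrad q.1 q.2 1).integrable le_rfl).const_mul _]
  refine Finset.sum_eq_zero fun q hq => ?_
  rw [integral_const_mul,
    integral_mul_eq_zero_of_ne hmeas hrad hind (Finset.mem_offDiag.1 hq).2.2, mul_zero]

theorem integral_offDiagForm_sq [DecidableEq ι] {B : Matrix ι ι ℝ} (hB : B.IsSymm) :
    ∫ ω, offDiagForm B (ε · ω) ^ 2 ∂P = 2 * ∑ p ∈ Finset.univ.offDiag, B p.1 p.2 ^ 2 := by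
  have hterm : ∀ p q : ι × ι, (∫ ω, B p.1 p.2 * (ε p.1 ω * ε p.2 ω) *
      (B q.1 q.2 * (ε q.1 ω * ε q.2 ω)) ∂P) =
      B p.1 p.2 * B q.1 q.2 * ∫ ω, ε p.1 ω * ε p.2 ω * (ε q.1 ω * ε q.2 ω) ∂P := fun p q => by
    rw [← integral_const_mul]; congr 1; ext ω; ring
  have hint : ∀ p q : ι × ι, Integrable (fun ω => B p.1 p.2 * (ε p.1 ω * ε p.2 ω) *
      (B q.1 q.2 * (ε q.1 ω * ε q.2 ω))) P := fun p q =>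
    ((memLp_mul_of_isRademacher hmeas hrad p.1 p.2 2).const_mul _).integrable_mul
      ((memLp_mul_of_isRademacher hmeas hrad q.1 q.2 2).const_mul _)
  simp only [offDiagForm, sq, Finset.sum_mul_sum]
  rw [integral_finsetSum _ fun p _ => integrable_finsetSum _ fun q _ => hint p q,
    Finset.mul_sum]
  refine Finset.sum_congr rfl fun p hp => ?_
  have hp' := (Finset.mem_offDiag.1 hp).2.2
  calc ∫ ω, ∑ q ∈ Finset.univ.offDiag, B p.1 p.2 * (ε p.1 ω * ε p.2 ω) *
        (B q.1 q.2 * (ε q.1 ω * ε q.2 ω)) ∂P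
      = ∑ q ∈ Finset.univ.offDiag,
          (if s(p.1, p.2) = s(q.1, q.2) then B p.1 p.2 * B q.1 q.2 else 0) := by
        rw [integral_finsetSum _ fun q _ => hint p q]
        refine Finset.sum_congr rfl fun q hq => ?_
        rw [hterm, integral_mul_mul_mul_eq_ite hmeas hrad hind hp' (Finset.mem_offDiag.1 hq).2.2,
          mul_ite, mul_one, mul_zero]
    _ = 2 * (B p.1 p.2 * B p.1 p.2) := by
        rw [Finset.sum_offDiag_ite_sym2_eq hp, Prod.fst_swap, Prod.snd_swap, hB.apply]
        ring

theorem integral_dotProduct_mulVec_of_isRademacher [DecidableEq ι] (B : Matrix ι ι ℝ) :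
    ∫ ω, (ε · ω) ⬝ᵥ B *ᵥ (ε · ω) ∂P = B.trace := by
  rw [integral_congr_ae (ae_dotProduct_mulVec_eq_trace_add_offDiagForm hmeas hrad B),
    integral_add (integrable_const _) ((memLp_offDiagForm hmeas hrad B 1).integrable le_rfl),
    integral_offDiagForm hmeas hrad hind, integral_const]
  simp

theorem variance_dotProduct_mulVec_of_isRademacher [DecidableEq ι] {B : Matrix ι ι ℝ}
    (hB : B.IsSymm) :
    Var[fun ω => (ε · ω) ⬝ᵥ B *ᵥ (ε · ω); P] = 2 * ∑ p ∈ Finset.univ.offDiag, B p.1 p.2 ^ 2 := by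
  have hQ := memLp_offDiagForm hmeas hrad B 1 (P := P)
  rw [variance_congr (ae_dotProduct_mulVec_eq_trace_add_offDiagForm hmeas hrad B),
    variance_const_add hQ.aestronglyMeasurable,
    variance_of_integral_eq_zero hQ.aestronglyMeasurable.aemeasurable
      (integral_offDiagForm hmeas hrad hind B),
    integral_offDiagForm_sq hmeas hrad hind hB]

end RademacherChaos

end

/-- For an orthonormal family `φ_1, …, φ_D` in `ℝ^n` and a vector `ε` of independent
Rademacher variables, the chi-square type statistic `χ = (∑_j ⟨ε, φ_j⟩²)^{1/2}`
satisfies `D − 2 ≤ (E[χ])² ≤ D`. -/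
theorem chi_expectation_bounds {n D : ℕ}
    {Ω : Type*} [MeasurableSpace Ω] (P : Measure Ω) [IsProbabilityMeasure P]
    (ε : Fin n → Ω → ℝ) (hmeas : ∀ i, Measurable (ε i))
    (hind : iIndepFun ε P)
    (hrad : ∀ i, P {ω | ε i ω = 1} = 1/2 ∧ P {ω | ε i ω = -1} = 1/2)
    (φ : Fin D → Fin n → ℝ)
    (horth : ∀ j j', ∑ i, φ j i * φ j' i = if j = j' then 1 else 0)
    (χ : Ω → ℝ)
    (hχ : ∀ ω, χ ω = Real.sqrt (∑ j, (∑ i, ε i ω * φ j i) ^ 2)) :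
    (D : ℝ) - 2 ≤ (∫ ω, χ ω ∂P) ^ 2 ∧ (∫ ω, χ ω ∂P) ^ 2 ≤ (D : ℝ) := by
  set Φ : Matrix (Fin D) (Fin n) ℝ := of φ
  have hΦ : Φ * Φᵀ = 1 := by
    ext j j'
    simpa [Φ, mul_apply, one_apply] using horth j j'
  have hB : (Φᵀ * Φ).IsSymm := by rw [IsSymm, transpose_mul, transpose_transpose]
  set S : Ω → ℝ := fun ω => (ε · ω) ⬝ᵥ (Φᵀ * Φ) *ᵥ (ε · ω)
  have hχS : χ = fun ω => √(S ω) := by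
    ext ω
    simp only [hχ, S, dotProduct_transpose_mul_self_mulVec]
    simp [dotProduct, mulVec, Φ, mul_comm, sq]
  have hS0 : 0 ≤ᵐ[P] S := Filter.Eventually.of_forall fun ω => by
    simp only [S, dotProduct_transpose_mul_self_mulVec]
    exact Finset.sum_nonneg fun j _ => mul_self_nonneg _
  have hS2 : MemLp S 2 P := memLp_dotProduct_mulVec_of_isRademacher hmeas hrad (Φᵀ * Φ) 2
  have hmean : ∫ ω, S ω ∂P = D := by
    rw [integral_dotProduct_mulVec_of_isRademacher hmeas hrad hind,
      trace_transpose_mul_self_of_mul_transpose_eq_one hΦ, Fintype.card_fin]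
  have hvar : Var[S; P] ≤ 2 * D := by
    have hfrob := sum_sq_transpose_mul_self_of_mul_transpose_eq_one hΦ
    rw [Fintype.card_fin] at hfrob
    rw [variance_dotProduct_mulVec_of_isRademacher hmeas hrad hind hB]
    linarith [Finset.sum_offDiag_le_sum_sum fun i j => sq_nonneg ((Φᵀ * Φ) i j)]
  have hlower := integral_sub_variance_div_le_sq_integral_sqrt hS0 hS2
  have hupper := sq_integral_sqrt_le_integral hS0 (hS2.integrable one_le_two)
  rw [hmean, ← hχS] at hlower hupper
  refine ⟨le_trans ?_ hlower, hupper⟩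
  gcongr
  exact div_le_of_le_mul₀ D.cast_nonneg zero_le_two hvar
end

section
/- Let φ_1,…,φ_D be orthonormal vectors in ℝ^n, ε a vector of independent Rademacher variables, and χ = (∑_{j=1}^D ⟨ε, φ_j⟩²)^{1/2}. Then for every x > 0, P(χ > √D + 2√(2x)) ≤ e^{−x} and P(χ < √((D−2)_+) − 2√(2x)) ≤ e^{−x}. -/
/-!
Samson's weak transport inequality for the uniform measure on `{-1, 1}ⁿ` says that
`E e^{Q f} · E e^{-f} ≤ 1` for every `f`, where `Q f x = inf_ν (∫ f dν + |x - bar ν|²/8)`;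
it follows by induction on `n` from an explicit two-point inequality. For `f = λ g` with `g`
convex and `1`-Lipschitz, Jensen and the Lipschitz bound give `Q f ≥ f - 2λ²`, and Jensen for
`exp` turns the product bound into `E e^{±λ (g - E g)} ≤ e^{2λ²}`; Chernoff with `λ = t / 4`
gives both tails `e^{-t²/8}`. Here `χ = ‖Φ ε‖` for the contraction `Φ` with rows `φ_j`, so
`E χ² = D`, and Efron–Stein, with the one-sided differences of a norm bounded through its
gradient, gives `Var χ ≤ 2`; hence `D - 2 ≤ (E χ)² ≤ D`, and `t = 2 √(2x)` finishes.
-/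

open Finset MeasureTheory ProbabilityTheory

namespace SignCube

noncomputable section

lemma exp_le_taylor_four {x : ℝ} (hx : |x| ≤ 1) :
    Real.exp x ≤ 1 + x + x ^ 2 / 2 + x ^ 3 / 6 + 5 / 96 * x ^ 4 := by
  have h := (abs_sub_le_iff.1 (Real.exp_bound hx (n := 4) (by norm_num))).1
  norm_num [Finset.sum_range_succ, Nat.factorial, ← abs_pow,
    abs_of_nonneg (by positivity : 0 ≤ x ^ 4)] at h
  linarith

lemma exp_sub_add_exp_neg_add_exp_neg_le_three {a : ℝ} (h0 : 0 ≤ a) (h1 : a ≤ 1) :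
    Real.exp (a - a ^ 2 / 2) + Real.exp (-a) + Real.exp (-(a ^ 2 / 2)) ≤ 3 := by
  have t1 := exp_le_taylor_four (x := a - a ^ 2 / 2) (by rw [abs_le]; constructor <;> nlinarith)
  have t2 := exp_le_taylor_four (x := -a) (by rw [abs_le]; constructor <;> nlinarith)
  have t3 := exp_le_taylor_four (x := -(a ^ 2 / 2)) (by rw [abs_le]; constructor <;> nlinarith)
  have hq : -(1 : ℝ) / 2 + 5 / 48 * a + 1 / 48 * a ^ 2 + 7 / 192 * a ^ 3 - 5 / 192 * a ^ 4
      + 5 / 768 * a ^ 5 ≤ -1 / 3 := by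
    nlinarith [pow_nonneg h0 3, pow_nonneg h0 4, pow_nonneg h0 5, sq_nonneg a]
  have ha3 : 0 ≤ a ^ 3 := pow_nonneg h0 3
  nlinarith [mul_nonneg ha3 (sub_nonneg.2 h1), mul_le_mul_of_nonneg_left hq ha3]

lemma exp_half_add_one_mul_exp_neg_add_one_le_four {a : ℝ} (ha : 1 ≤ a) :
    (Real.exp (1 / 2) + 1) * (Real.exp (-a) + 1) ≤ 4 := by
  have h2 : Real.exp (-a) ≤ Real.exp (-1) := Real.exp_le_exp.2 (by linarith)
  have h3 : Real.exp (-1) ≤ 0.368 := by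
    rw [Real.exp_neg, inv_le_comm₀ (Real.exp_pos 1) (by norm_num)]
    linarith [Real.exp_one_gt_d9]
  have h4 : Real.exp (1 / 2) ≤ 1.6488 := by
    have h : Real.exp (1 / 2) * Real.exp (1 / 2) = Real.exp 1 := by
      rw [← Real.exp_add]; norm_num
    nlinarith [Real.exp_one_lt_d9, Real.exp_pos (1 / 2 : ℝ)]
  nlinarith [Real.exp_pos (-a), Real.exp_pos (1 / 2 : ℝ)]

/-- The weak transport inequality for the uniform measure on two points, in dual form. -/
def TwoPointBound (A B : ℝ) : Prop :=
  ∃ p ∈ Set.Icc (0 : ℝ) 1, ∃ q ∈ Set.Icc (0 : ℝ) 1,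
    (Real.exp (p * A + (1 - p) * B + (1 - p) ^ 2 / 2)
      + Real.exp (q * A + (1 - q) * B + q ^ 2 / 2)) * (Real.exp (-A) + Real.exp (-B)) ≤ 4

lemma twoPointBound_of_le {A B : ℝ} (h : B ≤ A) : TwoPointBound A B := by
  obtain ⟨a, ha, rfl⟩ : ∃ a, 0 ≤ a ∧ A = B + a := ⟨A - B, sub_nonneg.2 h, by ring⟩
  set s := min a 1
  refine ⟨1 - s, ⟨by simp [s], by simp [s]; positivity⟩, 0, ⟨le_rfl, zero_le_one⟩, ?_⟩
  have expand : (Real.exp ((1 - s) * (B + a) + (1 - (1 - s)) * B + (1 - (1 - s)) ^ 2 / 2)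
      + Real.exp (0 * (B + a) + (1 - 0) * B + 0 ^ 2 / 2)) * (Real.exp (-(B + a)) + Real.exp (-B))
      = Real.exp (s ^ 2 / 2 - s * a) + Real.exp (a - s * a + s ^ 2 / 2) + Real.exp (-a) + 1 := by
    simp only [add_mul, mul_add, ← Real.exp_add]
    ring_nf
    rw [Real.exp_zero]
    ring
  rw [expand]
  rcases le_total a 1 with ha1 | ha1
  · rw [show s = a from min_eq_left ha1]
    have := exp_sub_add_exp_neg_add_exp_neg_le_three ha ha1
    ring_nf at this ⊢
    linarith
  · rw [show s = 1 from min_eq_right ha1]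
    have := exp_half_add_one_mul_exp_neg_add_one_le_four ha1
    rw [show (1 : ℝ) ^ 2 / 2 - 1 * a = -a + 1 / 2 by ring,
      show a - 1 * a + 1 ^ 2 / 2 = 1 / 2 by ring, Real.exp_add]
    nlinarith

lemma twoPointBound_comm {A B : ℝ} (h : TwoPointBound A B) : TwoPointBound B A := by
  obtain ⟨p, ⟨hp0, hp1⟩, q, ⟨hq0, hq1⟩, h⟩ := h
  refine ⟨1 - q, ⟨by linarith, by linarith⟩, 1 - p, ⟨by linarith, by linarith⟩, ?_⟩
  convert h using 1
  rw [add_comm (Real.exp (-B)), add_comm]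
  congr 3 <;> ring

lemma twoPointBound (A B : ℝ) : TwoPointBound A B :=
  (le_total B A).elim twoPointBound_of_le fun h => twoPointBound_comm (twoPointBound_of_le h)

def spin (b : Bool) : ℝ := if b then 1 else -1

@[simp] lemma spin_true : spin true = 1 := rfl

@[simp] lemma spin_false : spin false = -1 := rfl

@[simp] lemma spin_not (b : Bool) : spin (!b) = -spin b := by cases b <;> simp

@[simp] lemma spin_sq (b : Bool) : spin b ^ 2 = 1 := by cases b <;> norm_num

lemma spin_injective : Function.Injective spin := by
  intro a b h; cases a <;> cases b <;> norm_num [spin] at h <;> rfl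

variable {n : ℕ}

def spinVec (σ : Fin n → Bool) : EuclideanSpace ℝ (Fin n) := WithLp.toLp 2 fun i => spin (σ i)

@[simp] lemma spinVec_apply (σ : Fin n → Bool) (i : Fin n) :
    (spinVec σ).ofLp i = spin (σ i) := rfl

def flipAt (i : Fin n) (σ : Fin n → Bool) : Fin n → Bool := Function.update σ i (!σ i)

lemma flipAt_involutive (i : Fin n) : Function.Involutive (flipAt i) := by
  intro σ; simp [flipAt]

lemma flipAt_zero_cons (t : Bool) (τ : Fin n → Bool) :
    flipAt 0 (Fin.cons t τ : Fin (n + 1) → Bool) = Fin.cons (!t) τ := by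
  simp [flipAt, Fin.update_cons_zero]

lemma flipAt_succ_cons (i : Fin n) (t : Bool) (τ : Fin n → Bool) :
    flipAt i.succ (Fin.cons t τ : Fin (n + 1) → Bool) = Fin.cons t (flipAt i τ) := by
  simp [flipAt, Fin.cons_update]

lemma spinVec_flipAt (i : Fin n) (σ : Fin n → Bool) :
    spinVec (flipAt i σ) = spinVec σ - (2 * spin (σ i)) • EuclideanSpace.single i 1 := by
  ext k
  by_cases h : k = i
  · subst h; simp [flipAt]; ring
  · simp [flipAt, h]

lemma sum_cube_succ {M : Type*} [AddCommMonoid M] (F : (Fin (n + 1) → Bool) → M) :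
    ∑ σ, F σ = ∑ τ, F (Fin.cons true τ) + ∑ τ, F (Fin.cons false τ) := by
  rw [← (Fin.consEquiv fun _ => Bool).sum_comp, Fintype.sum_prod_type, Fintype.sum_bool]
  rfl

lemma four_pow_eq (n : ℕ) : (4 : ℝ) ^ n = 2 ^ n * 2 ^ n := by rw [← mul_pow]; norm_num

lemma sum_spin_mul_spin (i k : Fin n) :
    ∑ σ : Fin n → Bool, spin (σ i) * spin (σ k) = if i = k then 2 ^ n else 0 := by
  split_ifs with h
  · subst h; simp [← sq]
  · have hflip := Equiv.sum_comp (flipAt_involutive i).toPerm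
      fun σ : Fin n → Bool => spin (σ i) * spin (σ k)
    simp only [Function.Involutive.coe_toPerm, flipAt, Function.update_self,
      Function.update_of_ne (Ne.symm h), spin_not, neg_mul, Finset.sum_neg_distrib] at hflip
    linarith

lemma sum_sq_sum_spin_mul (c : Fin n → ℝ) :
    ∑ σ : Fin n → Bool, (∑ i, spin (σ i) * c i) ^ 2 = 2 ^ n * ∑ i, c i ^ 2 := by
  simp_rw [sq, Finset.sum_mul_sum, mul_mul_mul_comm _ (c _),
    Finset.sum_comm (γ := Fin n → Bool), ← Finset.sum_mul, sum_spin_mul_spin]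
  simp [Finset.mul_sum, mul_comm]

lemma le_convexComb_ciInf {ι κ : Type*} [Nonempty ι] [Nonempty κ] {a : ι → ℝ}
    {b : κ → ℝ} {p X : ℝ} (hp0 : 0 ≤ p) (hp1 : p ≤ 1)
    (h : ∀ i j, X ≤ p * a i + (1 - p) * b j) :
    X ≤ p * (⨅ i, a i) + (1 - p) * ⨅ j, b j := by
  refine le_of_forall_pos_le_add fun δ hδ => ?_
  obtain ⟨i, hi⟩ := exists_lt_of_ciInf_lt (lt_add_of_pos_right (⨅ i, a i) hδ)
  obtain ⟨j, hj⟩ := exists_lt_of_ciInf_lt (lt_add_of_pos_right (⨅ j, b j) hδ)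
  nlinarith [h i j, mul_le_mul_of_nonneg_left hi.le hp0,
    mul_le_mul_of_nonneg_left hj.le (sub_nonneg.2 hp1)]

/-- The objective of Samson's barycentric inf-convolution `Q f x = inf_ν infConvObj f x ν`. -/
def infConvObj (f : (Fin n → Bool) → ℝ) (x : Fin n → Bool) (ν : (Fin n → Bool) → ℝ) :
    ℝ :=
  ∑ y, ν y * f y + (∑ i, (spin (x i) - ∑ y, ν y * spin (y i)) ^ 2) / 8

def infConv (f : (Fin n → Bool) → ℝ) (x : Fin n → Bool) : ℝ :=
  ⨅ ν : stdSimplex ℝ (Fin n → Bool), infConvObj f x ν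

lemma bddBelow_range_infConvObj (f : (Fin n → Bool) → ℝ) (x : Fin n → Bool) :
    BddBelow (Set.range fun ν : stdSimplex ℝ (Fin n → Bool) => infConvObj f x ν) := by
  obtain ⟨y₀, -, hy₀⟩ := Finset.exists_min_image univ f univ_nonempty
  refine ⟨f y₀, ?_⟩
  rintro _ ⟨ν, rfl⟩
  calc f y₀ = ∑ y, ν y * f y₀ := by rw [← Finset.sum_mul, stdSimplex.sum_eq_one, one_mul]
    _ ≤ ∑ y, ν y * f y := by
        gcongr with y
        exacts [stdSimplex.zero_le ν y, hy₀ y (mem_univ y)]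
    _ ≤ infConvObj f x ν := le_add_of_nonneg_right (by positivity)

lemma infConv_le (f : (Fin n → Bool) → ℝ) (x : Fin n → Bool) {ν : (Fin n → Bool) → ℝ}
    (hν : ν ∈ stdSimplex ℝ (Fin n → Bool)) : infConv f x ≤ infConvObj f x ν :=
  ciInf_le (bddBelow_range_infConvObj f x) ⟨ν, hν⟩

lemma le_infConv (f : (Fin n → Bool) → ℝ) (x : Fin n → Bool) {c : ℝ}
    (h : ∀ ν ∈ stdSimplex ℝ (Fin n → Bool), c ≤ infConvObj f x ν) : c ≤ infConv f x :=
  le_ciInf fun ν => h ν ν.2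

lemma infConv_le_self (f : (Fin n → Bool) → ℝ) (x : Fin n → Bool) :
    infConv f x ≤ f x := by
  classical
  refine (infConv_le f x (single_mem_stdSimplex ℝ x)).trans_eq ?_
  simp [infConvObj, Pi.single_apply]

/-- The mixture `p (δ_true ⊗ ν₁) + (1 - p) (δ_false ⊗ ν₀)` on `Fin (n + 1) → Bool`. -/
def consMix (p : ℝ) (ν₁ ν₀ : (Fin n → Bool) → ℝ) (z : Fin (n + 1) → Bool) : ℝ :=
  if z 0 then p * ν₁ (Fin.tail z) else (1 - p) * ν₀ (Fin.tail z)

lemma sum_consMix_mul (p : ℝ) (ν₁ ν₀ : (Fin n → Bool) → ℝ)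
    (H : (Fin (n + 1) → Bool) → ℝ) :
    ∑ z, consMix p ν₁ ν₀ z * H z =
      p * ∑ τ, ν₁ τ * H (Fin.cons true τ)
        + (1 - p) * ∑ τ, ν₀ τ * H (Fin.cons false τ) := by
  simp [sum_cube_succ, consMix, Finset.mul_sum, mul_assoc]

lemma consMix_mem_stdSimplex {p : ℝ} (hp0 : 0 ≤ p) (hp1 : p ≤ 1)
    (ν₁ ν₀ : stdSimplex ℝ (Fin n → Bool)) :
    consMix p ν₁ ν₀ ∈ stdSimplex ℝ (Fin (n + 1) → Bool) := by
  refine ⟨fun z => ?_, ?_⟩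
  · unfold consMix; split_ifs <;> exact mul_nonneg (by linarith) (stdSimplex.zero_le _ _)
  · simpa using sum_consMix_mul p ν₁ ν₀ 1

lemma infConv_cons_le (f : (Fin (n + 1) → Bool) → ℝ) (t : Bool) (τ : Fin n → Bool)
    {p : ℝ} (hp0 : 0 ≤ p) (hp1 : p ≤ 1) :
    infConv f (Fin.cons t τ) ≤ p * infConv (fun y => f (Fin.cons true y)) τ
      + (1 - p) * infConv (fun y => f (Fin.cons false y)) τ + (spin t - (2 * p - 1)) ^ 2 / 8 := by
  rw [← sub_le_iff_le_add]
  unfold infConv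
  refine le_convexComb_ciInf hp0 hp1 fun ν₁ ν₀ => ?_
  rw [sub_le_iff_le_add]
  refine (infConv_le f _ (consMix_mem_stdSimplex hp0 hp1 ν₁ ν₀)).trans ?_
  have hbar : ∀ i : Fin n,
      (spin (τ i) - ∑ z, consMix p ν₁ ν₀ z * spin (z i.succ)) ^ 2 ≤
      p * (spin (τ i) - ∑ y, ν₁ y * spin (y i)) ^ 2
        + (1 - p) * (spin (τ i) - ∑ y, ν₀ y * spin (y i)) ^ 2 := by
    intro i
    simp only [sum_consMix_mul, Fin.cons_succ]
    nlinarith [sq_nonneg ((∑ y, ν₁ y * spin (y i)) - ∑ y, ν₀ y * spin (y i)),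
      mul_nonneg hp0 (sub_nonneg.2 hp1)]
  have hbar0 : ∑ z, consMix p ν₁ ν₀ z * spin (z 0) = 2 * p - 1 := by
    simp [sum_consMix_mul]; ring
  have hcost := Finset.sum_le_sum fun i (_ : i ∈ univ) => hbar i
  simp only [Finset.sum_add_distrib, ← Finset.mul_sum] at hcost
  simp only [infConvObj, Fin.sum_univ_succ (n := n), Fin.cons_zero, Fin.cons_succ]
  rw [hbar0, sum_consMix_mul]
  linarith

lemma sum_exp_convexComb_le {ι : Type*} [Fintype ι] [Nonempty ι] (X Y : ι → ℝ) {r : ℝ}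
    (hr0 : 0 ≤ r) (hr1 : r ≤ 1) :
    ∑ i, Real.exp (r * X i + (1 - r) * Y i) ≤
      Real.exp (r * Real.log (∑ i, Real.exp (X i))
        + (1 - r) * Real.log (∑ i, Real.exp (Y i))) := by
  set a := Real.log (∑ i, Real.exp (X i))
  set b := Real.log (∑ i, Real.exp (Y i))
  have hterm : ∀ i, Real.exp (r * X i + (1 - r) * Y i) ≤
      (r * Real.exp (X i - a) + (1 - r) * Real.exp (Y i - b))
        * Real.exp (r * a + (1 - r) * b) := by
    intro i
    have := convexOn_exp.2 (Set.mem_univ (X i - a)) (Set.mem_univ (Y i - b)) hr0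
      (sub_nonneg.2 hr1) (add_sub_cancel r 1)
    simp only [smul_eq_mul] at this
    calc Real.exp (r * X i + (1 - r) * Y i)
        = Real.exp (r * (X i - a) + (1 - r) * (Y i - b)) * Real.exp (r * a + (1 - r) * b) := by
          rw [← Real.exp_add]; ring_nf
      _ ≤ _ := by gcongr
  have hnorm : ∀ Z : ι → ℝ,
      ∑ i, Real.exp (Z i - Real.log (∑ i, Real.exp (Z i))) = 1 := by
    intro Z
    simp_rw [Real.exp_sub, ← Finset.sum_div]
    rw [Real.exp_log (by positivity), div_self (by positivity)]
  calc _ ≤ ∑ i, (r * Real.exp (X i - a) + (1 - r) * Real.exp (Y i - b))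
        * Real.exp (r * a + (1 - r) * b) := Finset.sum_le_sum fun i _ => hterm i
    _ = _ := by
        rw [← Finset.sum_mul, Finset.sum_add_distrib, ← Finset.mul_sum, ← Finset.mul_sum,
          hnorm, hnorm]
        ring

lemma sum_exp_infConv_cons_le (f : (Fin (n + 1) → Bool) → ℝ) (t : Bool) {r : ℝ}
    (hr0 : 0 ≤ r) (hr1 : r ≤ 1) {K A B : ℝ} (hK : 0 < K)
    (h₁ : ∑ τ, Real.exp (infConv (fun y => f (Fin.cons true y)) τ) ≤ K * Real.exp A)
    (h₀ : ∑ τ, Real.exp (infConv (fun y => f (Fin.cons false y)) τ) ≤ K * Real.exp B) :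
    ∑ τ, Real.exp (infConv f (Fin.cons t τ)) ≤
      K * Real.exp (r * A + (1 - r) * B + (spin t - (2 * r - 1)) ^ 2 / 8) := by
  have hlog : ∀ {S C : ℝ}, 0 < S → S ≤ K * Real.exp C → Real.log S ≤ Real.log K + C :=
    fun hS h => by
      simpa [Real.log_mul hK.ne' (Real.exp_pos _).ne'] using Real.log_le_log hS h
  have l₁ := hlog (by positivity) h₁
  have l₀ := hlog (by positivity) h₀
  calc ∑ τ, Real.exp (infConv f (Fin.cons t τ))
      ≤ ∑ τ, Real.exp (r * infConv (fun y => f (Fin.cons true y)) τ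
          + (1 - r) * infConv (fun y => f (Fin.cons false y)) τ)
          * Real.exp ((spin t - (2 * r - 1)) ^ 2 / 8) := by
        gcongr with τ
        rw [← Real.exp_add]
        exact Real.exp_le_exp.2 (infConv_cons_le f t τ hr0 hr1)
    _ ≤ Real.exp (r * (Real.log K + A) + (1 - r) * (Real.log K + B))
          * Real.exp ((spin t - (2 * r - 1)) ^ 2 / 8) := by
        rw [← Finset.sum_mul]
        gcongr
        refine (sum_exp_convexComb_le _ _ hr0 hr1).trans (Real.exp_le_exp.2 ?_)
        nlinarith [mul_le_mul_of_nonneg_left l₁ hr0,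
          mul_le_mul_of_nonneg_left l₀ (sub_nonneg.2 hr1)]
    _ = _ := by
        rw [← Real.exp_add, show r * (Real.log K + A) + (1 - r) * (Real.log K + B)
          + (spin t - (2 * r - 1)) ^ 2 / 8 =
          Real.log K + (r * A + (1 - r) * B + (spin t - (2 * r - 1)) ^ 2 / 8) by ring,
          Real.exp_add, Real.exp_log hK]

/-- Samson's weak transport inequality for the uniform measure on the cube, in dual form. -/
theorem sum_exp_infConv_mul_sum_exp_neg_le (f : (Fin n → Bool) → ℝ) :
    (∑ x, Real.exp (infConv f x)) * ∑ y, Real.exp (-f y) ≤ 4 ^ n := by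
  induction n with
  | zero => simpa [← Real.exp_add, ← sub_eq_add_neg] using infConv_le_self f _
  | succ n ih =>
    set f₁ : (Fin n → Bool) → ℝ := fun y => f (Fin.cons true y)
    set f₀ : (Fin n → Bool) → ℝ := fun y => f (Fin.cons false y)
    have hS : ∀ g : (Fin n → Bool) → ℝ, ∑ τ, Real.exp (infConv g τ) ≤
        4 ^ n * Real.exp (-Real.log (∑ y, Real.exp (-g y))) := by
      intro g
      rw [Real.exp_neg, Real.exp_log (by positivity), ← div_eq_mul_inv,
        le_div_iff₀ (by positivity)]
      exact ih g
    set A := -Real.log (∑ y, Real.exp (-f₁ y))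
    set B := -Real.log (∑ y, Real.exp (-f₀ y))
    obtain ⟨p, ⟨hp0, hp1⟩, q, ⟨hq0, hq1⟩, htwo⟩ := twoPointBound A B
    have hT := sum_exp_infConv_cons_le f true hp0 hp1 (by positivity) (hS f₁) (hS f₀)
    have hF := sum_exp_infConv_cons_le f false hq0 hq1 (by positivity) (hS f₁) (hS f₀)
    rw [spin_true, show (1 - (2 * p - 1)) ^ 2 / 8 = (1 - p) ^ 2 / 2 by ring] at hT
    rw [spin_false, show (-1 - (2 * q - 1)) ^ 2 / 8 = q ^ 2 / 2 by ring] at hF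
    have hA : Real.exp (-A) = ∑ y, Real.exp (-f₁ y) := by
      rw [neg_neg, Real.exp_log (by positivity)]
    have hB : Real.exp (-B) = ∑ y, Real.exp (-f₀ y) := by
      rw [neg_neg, Real.exp_log (by positivity)]
    rw [sum_cube_succ, sum_cube_succ (fun y => Real.exp (-f y)), pow_succ, ← hA, ← hB]
    calc _ ≤ 4 ^ n * (Real.exp (p * A + (1 - p) * B + (1 - p) ^ 2 / 2)
          + Real.exp (q * A + (1 - q) * B + q ^ 2 / 2)) * (Real.exp (-A) + Real.exp (-B)) := by
          rw [mul_add (4 ^ n)]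
          gcongr
      _ ≤ 4 ^ n * 4 := by rw [mul_assoc]; gcongr

def mean (h : (Fin n → Bool) → ℝ) : ℝ := (∑ σ, h σ) / 2 ^ n

lemma sum_sub_mean (h : (Fin n → Bool) → ℝ) : ∑ σ, (h σ - mean h) = 0 := by
  simp [Finset.sum_sub_distrib, mean, mul_div_cancel₀ _ (pow_ne_zero n (two_ne_zero' ℝ))]

lemma two_pow_le_sum_exp (h : (Fin n → Bool) → ℝ) (h0 : ∑ σ, h σ = 0) :
    (2 : ℝ) ^ n ≤ ∑ σ, Real.exp (h σ) := by
  calc (2 : ℝ) ^ n = ∑ σ, (h σ + 1) := by simp [Finset.sum_add_distrib, h0]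
    _ ≤ _ := Finset.sum_le_sum fun σ _ => Real.add_one_le_exp _

lemma mean_sq_le_mean_sq (h : (Fin n → Bool) → ℝ) :
    mean h ^ 2 ≤ mean fun σ => h σ ^ 2 := by
  have := sq_sum_le_card_mul_sum_sq (s := univ) (f := h)
  simp only [card_univ, Fintype.card_fun, Fintype.card_bool, Fintype.card_fin, Nat.cast_pow,
    Nat.cast_ofNat] at this
  rw [mean, mean, div_pow, div_le_div_iff₀ (by positivity) (by positivity)]
  nlinarith [pow_pos (two_pos (α := ℝ)) n]

lemma card_lt_le_of_sum_exp_le {α : Type*} [Fintype α] (h : α → ℝ) {N t : ℝ} (ht : 0 ≤ t)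
    (hmgf : ∀ l : ℝ, 0 ≤ l → ∑ a, Real.exp (l * h a) ≤ N * Real.exp (2 * l ^ 2)) :
    (#{a | t < h a} : ℝ) ≤ N * Real.exp (-(t ^ 2 / 8)) := by
  have hsum : (#{a | t < h a} : ℝ) * Real.exp (t / 4 * t) ≤ N * Real.exp (2 * (t / 4) ^ 2) := by
    refine le_trans ?_ (hmgf (t / 4) (by positivity))
    rw [← nsmul_eq_mul, ← Finset.sum_const]
    refine (Finset.sum_le_sum fun a ha => ?_).trans
      (Finset.sum_le_sum_of_subset_of_nonneg (filter_subset _ _) fun _ _ _ => (Real.exp_pos _).le)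
    exact Real.exp_le_exp.2 (mul_le_mul_of_nonneg_left (mem_filter.1 ha).2.le (by positivity))
  rwa [← le_div_iff₀ (Real.exp_pos _), mul_div_assoc, ← Real.exp_sub,
    show 2 * (t / 4) ^ 2 - t / 4 * t = -(t ^ 2 / 8) by ring] at hsum

section Concentration

variable {g : EuclideanSpace ℝ (Fin n) → ℝ}

lemma sub_le_infConv_of_convexOn_of_lipschitzWith (hconv : ConvexOn ℝ Set.univ g)
    (hlip : LipschitzWith 1 g) {l : ℝ} (hl : 0 ≤ l) (x : Fin n → Bool) :
    l * g (spinVec x) - 2 * l ^ 2 ≤ infConv (fun σ => l * g (spinVec σ)) x := by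
  refine le_infConv _ x fun ν hν => ?_
  set b := ∑ y, ν y • spinVec y
  have hjensen : g b ≤ ∑ y, ν y * g (spinVec y) :=
    hconv.map_sum_le (fun y _ => hν.1 y) hν.2 fun _ _ => Set.mem_univ _
  have hlipx : g (spinVec x) ≤ g b + ‖spinVec x - b‖ := by
    have := hlip.dist_le_mul (spinVec x) b
    rw [NNReal.coe_one, one_mul, Real.dist_eq, dist_eq_norm] at this
    linarith [le_abs_self (g (spinVec x) - g b)]
  have hnorm : ‖spinVec x - b‖ ^ 2 = ∑ i, (spin (x i) - ∑ y, ν y * spin (y i)) ^ 2 := by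
    simp [b, EuclideanSpace.real_norm_sq_eq, WithLp.ofLp_sum, Finset.sum_apply]
  have hamgm : l * ‖spinVec x - b‖ ≤ 2 * l ^ 2 + ‖spinVec x - b‖ ^ 2 / 8 := by
    nlinarith [sq_nonneg (‖spinVec x - b‖ - 4 * l)]
  simp only [infConvObj, ← hnorm, mul_left_comm _ l, ← Finset.mul_sum]
  nlinarith [mul_le_mul_of_nonneg_left hjensen hl, mul_le_mul_of_nonneg_left hlipx hl]

lemma sum_exp_mul_sum_exp_neg_le (hconv : ConvexOn ℝ Set.univ g) (hlip : LipschitzWith 1 g)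
    {l : ℝ} (hl : 0 ≤ l) :
    (∑ σ, Real.exp (l * g (spinVec σ))) * ∑ σ, Real.exp (-(l * g (spinVec σ))) ≤
      4 ^ n * Real.exp (2 * l ^ 2) := by
  have hQ : ∑ σ, Real.exp (l * g (spinVec σ)) ≤
      (∑ σ, Real.exp (infConv (fun σ => l * g (spinVec σ)) σ)) * Real.exp (2 * l ^ 2) := by
    rw [Finset.sum_mul]
    gcongr with σ
    rw [← Real.exp_add, Real.exp_le_exp, ← sub_le_iff_le_add]
    exact sub_le_infConv_of_convexOn_of_lipschitzWith hconv hlip hl σ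
  calc _ ≤ (∑ σ, Real.exp (infConv (fun σ => l * g (spinVec σ)) σ)) *
          (∑ σ, Real.exp (-(l * g (spinVec σ)))) * Real.exp (2 * l ^ 2) := by
        rw [mul_right_comm]; gcongr
    _ ≤ _ := by gcongr; exact sum_exp_infConv_mul_sum_exp_neg_le _

lemma sum_exp_centered_mul_sum_exp_neg_le (hconv : ConvexOn ℝ Set.univ g)
    (hlip : LipschitzWith 1 g) {l : ℝ} (hl : 0 ≤ l) :
    (∑ σ, Real.exp (l * (g (spinVec σ) - mean fun σ => g (spinVec σ)))) *
      ∑ σ, Real.exp (l * (-(g (spinVec σ) - mean fun σ => g (spinVec σ)))) ≤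
      4 ^ n * Real.exp (2 * l ^ 2) := by
  set m := mean fun σ => g (spinVec σ)
  have e₁ : ∑ σ, Real.exp (l * (g (spinVec σ) - m)) =
      Real.exp (-(l * m)) * ∑ σ, Real.exp (l * g (spinVec σ)) := by
    rw [Finset.mul_sum]; congr! 1 with σ; rw [← Real.exp_add]; ring_nf
  have e₀ : ∑ σ, Real.exp (l * (-(g (spinVec σ) - m))) =
      Real.exp (l * m) * ∑ σ, Real.exp (-(l * g (spinVec σ))) := by
    rw [Finset.mul_sum]; congr! 1 with σ; rw [← Real.exp_add]; ring_nf
  rw [e₁, e₀, mul_mul_mul_comm, ← Real.exp_add, neg_add_cancel, Real.exp_zero, one_mul]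
  exact sum_exp_mul_sum_exp_neg_le hconv hlip hl

lemma sum_exp_centered_le (hconv : ConvexOn ℝ Set.univ g) (hlip : LipschitzWith 1 g)
    {l : ℝ} (hl : 0 ≤ l) :
    ∑ σ, Real.exp (l * (g (spinVec σ) - mean fun σ => g (spinVec σ))) ≤
        2 ^ n * Real.exp (2 * l ^ 2) ∧
      ∑ σ, Real.exp (l * (-(g (spinVec σ) - mean fun σ => g (spinVec σ)))) ≤
        2 ^ n * Real.exp (2 * l ^ 2) := by
  have hprod := sum_exp_centered_mul_sum_exp_neg_le hconv hlip hl
  have hzero := sum_sub_mean fun σ => g (spinVec σ)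
  have h₁ := two_pow_le_sum_exp (fun σ => l * (g (spinVec σ) - mean fun σ => g (spinVec σ)))
    (by rw [← Finset.mul_sum, hzero, mul_zero])
  have h₀ := two_pow_le_sum_exp
    (fun σ => l * (-(g (spinVec σ) - mean fun σ => g (spinVec σ))))
    (by rw [← Finset.mul_sum, Finset.sum_neg_distrib, hzero, neg_zero, mul_zero])
  rw [four_pow_eq] at hprod
  have h2 : (0 : ℝ) < 2 ^ n := by positivity
  constructor <;> nlinarith [Real.exp_pos (2 * l ^ 2)]

theorem card_mean_add_lt_le (hconv : ConvexOn ℝ Set.univ g) (hlip : LipschitzWith 1 g)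
    {t : ℝ} (ht : 0 ≤ t) :
    (#{σ | (mean fun σ => g (spinVec σ)) + t < g (spinVec σ)} : ℝ) ≤
      2 ^ n * Real.exp (-(t ^ 2 / 8)) := by
  convert card_lt_le_of_sum_exp_le _ ht fun l hl => (sum_exp_centered_le hconv hlip hl).1
    using 4 with σ
  rw [lt_sub_iff_add_lt']

theorem card_lt_mean_sub_le (hconv : ConvexOn ℝ Set.univ g) (hlip : LipschitzWith 1 g)
    {t : ℝ} (ht : 0 ≤ t) :
    (#{σ | g (spinVec σ) < (mean fun σ => g (spinVec σ)) - t} : ℝ) ≤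
      2 ^ n * Real.exp (-(t ^ 2 / 8)) := by
  convert card_lt_le_of_sum_exp_le _ ht fun l hl => (sum_exp_centered_le hconv hlip hl).2
    using 4 with σ
  rw [neg_sub, lt_sub_iff_add_lt', lt_sub_iff_add_lt, add_comm]

end Concentration

theorem efron_stein (f : (Fin n → Bool) → ℝ) :
    2 ^ n * ∑ σ, f σ ^ 2 - (∑ σ, f σ) ^ 2 ≤
      2 ^ n / 4 * ∑ σ, ∑ i, (f σ - f (flipAt i σ)) ^ 2 := by
  induction n with
  | zero => simp
  | succ n ih =>
    have hsplit : ∀ t τ, ∑ i, (f (Fin.cons t τ) - f (flipAt i (Fin.cons t τ))) ^ 2 =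
        (f (Fin.cons t τ) - f (Fin.cons (!t) τ)) ^ 2 +
          ∑ i, (f (Fin.cons t τ) - f (Fin.cons t (flipAt i τ))) ^ 2 := by
      intro t τ
      rw [Fin.sum_univ_succ, flipAt_zero_cons]
      simp only [flipAt_succ_cons]
    have hcs : (∑ τ, f (Fin.cons true τ) - ∑ τ, f (Fin.cons false τ)) ^ 2 ≤
        2 ^ n * ∑ τ, (f (Fin.cons true τ) - f (Fin.cons false τ)) ^ 2 := by
      simpa [← Finset.sum_sub_distrib] using sq_sum_le_card_mul_sum_sq (s := univ)
        (f := fun τ : Fin n → Bool => f (Fin.cons true τ) - f (Fin.cons false τ))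
    have hsym : ∑ τ, (f (Fin.cons false τ) - f (Fin.cons true τ)) ^ 2 =
        ∑ τ, (f (Fin.cons true τ) - f (Fin.cons false τ)) ^ 2 :=
      Finset.sum_congr rfl fun τ _ => by ring
    simp only [sum_cube_succ (fun σ => f σ ^ 2), sum_cube_succ f,
      sum_cube_succ (fun σ => ∑ i, (f σ - f (flipAt i σ)) ^ 2), hsplit, Bool.not_true,
      Bool.not_false, Finset.sum_add_distrib, hsym]
    rw [pow_succ]
    linear_combination 2 * ih (fun τ => f (Fin.cons true τ))
      + 2 * ih (fun τ => f (Fin.cons false τ)) + hcs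

lemma sum_sq_sub_flipAt_eq (f : (Fin n → Bool) → ℝ) (i : Fin n) :
    ∑ σ, (f σ - f (flipAt i σ)) ^ 2 = 2 * ∑ σ, max (f σ - f (flipAt i σ)) 0 ^ 2 := by
  have hpos : ∀ x : ℝ, x ^ 2 = max x 0 ^ 2 + max (-x) 0 ^ 2 := fun x => by
    rcases le_total x 0 with h | h <;> simp [h]
  have hswap := Equiv.sum_comp (flipAt_involutive i).toPerm
    fun σ => max (f σ - f (flipAt i σ)) 0 ^ 2
  simp only [Function.Involutive.coe_toPerm, flipAt_involutive i _] at hswap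
  simp only [hpos (f _ - f _), neg_sub, Finset.sum_add_distrib, hswap]
  ring

theorem two_pow_mul_sum_sq_sub_sq_sum_le (f : (Fin n → Bool) → ℝ) {K : ℝ}
    (hK : ∀ σ, ∑ i, max (f σ - f (flipAt i σ)) 0 ^ 2 ≤ K) :
    2 ^ n * ∑ σ, f σ ^ 2 - (∑ σ, f σ) ^ 2 ≤ 4 ^ n * K / 2 := by
  refine (efron_stein f).trans ?_
  rw [Finset.sum_comm]
  simp only [sum_sq_sub_flipAt_eq, ← Finset.mul_sum]
  rw [Finset.sum_comm]
  have := Finset.sum_le_sum fun σ (_ : σ ∈ univ) => hK σ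
  simp only [sum_const, card_univ, Fintype.card_fun, Fintype.card_bool, Fintype.card_fin,
    nsmul_eq_mul, Nat.cast_pow, Nat.cast_ofNat] at this
  rw [four_pow_eq]
  have h2 : (0 : ℝ) ≤ 2 ^ n := by positivity
  nlinarith

lemma norm_sub_norm_le_inner_div {F : Type*} [NormedAddCommGroup F] [InnerProductSpace ℝ F]
    (u v : F) : ‖u‖ - ‖v‖ ≤ inner ℝ u (u - v) / ‖u‖ := by
  rcases eq_or_ne u 0 with rfl | hu
  · simp
  rw [le_div_iff₀ (norm_pos_iff.2 hu), inner_sub_right, real_inner_self_eq_norm_sq]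
  nlinarith [real_inner_le_norm u v]

section Contraction

variable {F : Type*} [NormedAddCommGroup F] [InnerProductSpace ℝ F] [FiniteDimensional ℝ F]
  {L : EuclideanSpace ℝ (Fin n) →ₗ[ℝ] F}

lemma norm_adjoint_apply_le (hL : ∀ y, ‖L y‖ ≤ ‖y‖) (w : F) :
    ‖LinearMap.adjoint L w‖ ≤ ‖w‖ := by
  have h : ‖LinearMap.adjoint L w‖ ^ 2 ≤ ‖LinearMap.adjoint L w‖ * ‖w‖ := by
    calc ‖LinearMap.adjoint L w‖ ^ 2 = inner ℝ (L (LinearMap.adjoint L w)) w := by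
          rw [← LinearMap.adjoint_inner_right, real_inner_self_eq_norm_sq]
      _ ≤ ‖L (LinearMap.adjoint L w)‖ * ‖w‖ := real_inner_le_norm _ _
      _ ≤ _ := by gcongr; exact hL _
  nlinarith [norm_nonneg (LinearMap.adjoint L w), norm_nonneg w]

lemma sum_sq_max_norm_sub_norm_flipAt_le (hL : ∀ y, ‖L y‖ ≤ ‖y‖) (σ : Fin n → Bool) :
    ∑ i, max (‖L (spinVec σ)‖ - ‖L (spinVec (flipAt i σ))‖) 0 ^ 2 ≤ 4 := by
  set u := L (spinVec σ)
  set w := LinearMap.adjoint L u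
  rcases eq_or_ne u 0 with hu | hu
  · simp [hu]
  have hpos : 0 < ‖u‖ := norm_pos_iff.2 hu
  have hi : ∀ i, max (‖u‖ - ‖L (spinVec (flipAt i σ))‖) 0 ^ 2 ≤
      4 * w.ofLp i ^ 2 / ‖u‖ ^ 2 := by
    intro i
    have hinner : inner ℝ u (u - L (spinVec (flipAt i σ))) = 2 * spin (σ i) * w.ofLp i := by
      rw [spinVec_flipAt, map_sub, sub_sub_cancel, map_smul, inner_smul_right,
        ← LinearMap.adjoint_inner_left, EuclideanSpace.inner_single_right]
      simp [w]
    have hle := hinner ▸ norm_sub_norm_le_inner_div u (L (spinVec (flipAt i σ)))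
    calc max (‖u‖ - ‖L (spinVec (flipAt i σ))‖) 0 ^ 2
        ≤ (2 * spin (σ i) * w.ofLp i / ‖u‖) ^ 2 :=
          pow_le_pow_left₀ (le_max_right _ _)
            (max_le (hle.trans (le_abs_self _)) (abs_nonneg _)) 2 |>.trans_eq (sq_abs _)
      _ = 4 * w.ofLp i ^ 2 / ‖u‖ ^ 2 := by rw [div_pow, mul_pow, mul_pow, spin_sq]; ring
  calc _ ≤ ∑ i, 4 * w.ofLp i ^ 2 / ‖u‖ ^ 2 := Finset.sum_le_sum fun i _ => hi i
    _ = 4 * ‖w‖ ^ 2 / ‖u‖ ^ 2 := by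
        rw [EuclideanSpace.real_norm_sq_eq, ← Finset.sum_div, Finset.mul_sum]
    _ ≤ 4 := by
        rw [div_le_iff₀ (by positivity)]
        nlinarith [norm_adjoint_apply_le hL u, norm_nonneg w]

lemma mean_sq_sub_two_le_sq_mean_norm (hL : ∀ y, ‖L y‖ ≤ ‖y‖) :
    (mean fun σ => ‖L (spinVec σ)‖ ^ 2) - 2 ≤
      (mean fun σ => ‖L (spinVec σ)‖) ^ 2 := by
  have hvar := two_pow_mul_sum_sq_sub_sq_sum_le _ (sum_sq_max_norm_sub_norm_flipAt_le hL)
  rw [four_pow_eq] at hvar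
  have key : ∀ S₁ S₂ T : ℝ, T ≠ 0 →
      (S₁ / T) ^ 2 - (S₂ / T - 2) = (2 * (T * T) - (T * S₂ - S₁ ^ 2)) / T ^ 2 := by
    intro S₁ S₂ T hT; field_simp; ring
  rw [← sub_nonneg, mean, mean, key _ _ _ (by positivity)]
  exact div_nonneg (by linarith) (by positivity)

end Contraction

section Rademacher

variable {Ω : Type*} [MeasurableSpace Ω] {P : Measure Ω} {ε : Fin n → Ω → ℝ}

structure IsRademacher (P : Measure Ω) (ε : Fin n → Ω → ℝ) : Prop where
  measurable : ∀ i, Measurable (ε i)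
  indep : iIndepFun ε P
  measure_eq_pm_one : ∀ i, P {ω | ε i ω = 1} = 1 / 2 ∧ P {ω | ε i ω = -1} = 1 / 2

lemma ae_eq_one_or_eq_neg_one [IsProbabilityMeasure P] (hmeas : ∀ i, Measurable (ε i))
    (hrad : ∀ i, P {ω | ε i ω = 1} = 1 / 2 ∧ P {ω | ε i ω = -1} = 1 / 2) :
    ∀ᵐ ω ∂P, ∀ i, ε i ω = 1 ∨ ε i ω = -1 := by
  refine ae_all_iff.2 fun i => ?_
  have hm : ∀ c : ℝ, MeasurableSet {ω | ε i ω = c} := fun c =>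
    hmeas i (measurableSet_singleton c)
  have hunion : P ({ω | ε i ω = 1} ∪ {ω | ε i ω = -1}) = 1 := by
    rw [measure_union _ (hm _), (hrad i).1, (hrad i).2, ENNReal.add_halves]
    refine Set.disjoint_left.2 fun ω (h₁ : ε i ω = 1) (h₂ : ε i ω = -1) => ?_
    linarith
  exact (prob_compl_eq_zero_iff ((hm 1).union (hm _))).2 hunion

lemma measure_forall_eq_spin (hind : iIndepFun ε P)
    (hrad : ∀ i, P {ω | ε i ω = 1} = 1 / 2 ∧ P {ω | ε i ω = -1} = 1 / 2)
    (σ : Fin n → Bool) : P {ω | ∀ i, ε i ω = spin (σ i)} = 2⁻¹ ^ n := by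
  have hi : ∀ i, P {ω | ε i ω = spin (σ i)} = 2⁻¹ := fun i => by
    cases σ i
    · simpa [one_div] using (hrad i).2
    · simpa [one_div] using (hrad i).1
  rw [Set.ofPred_forall, hind.meas_iInter (s := fun i => {ω | ε i ω = spin (σ i)})
    fun i => ⟨{spin (σ i)}, measurableSet_singleton _, rfl⟩]
  simp [hi]

theorem IsRademacher.toReal_measure_eq_card [IsProbabilityMeasure P] (hε : IsRademacher P ε)
    (p : (Fin n → ℝ) → Prop) [DecidablePred p] :
    (P {ω | p fun i => ε i ω}).toReal =
      #{σ : Fin n → Bool | p fun i => spin (σ i)} / 2 ^ n := by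
  set A : Finset (Fin n → Bool) := {σ | p fun i => spin (σ i)}
  have hae :
      {ω | p fun i => ε i ω} =ᵐ[P] ⋃ σ ∈ A, {ω | ∀ i, ε i ω = spin (σ i)} := by
    refine Filter.eventuallyEq_set.2 ?_
    filter_upwards [ae_eq_one_or_eq_neg_one hε.measurable hε.measure_eq_pm_one] with ω hω
    refine ⟨fun (h : p fun i => ε i ω) => ?_, fun h => ?_⟩
    · have hspin : ∀ i, ε i ω = spin (decide (ε i ω = 1)) := fun i => by
        rcases hω i with h1 | h1 <;> simp [h1, spin]
      refine Set.mem_iUnion₂.2 ⟨fun i => decide (ε i ω = 1), ?_, hspin⟩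
      simpa [A, ← funext hspin] using h
    · obtain ⟨σ, hσ, hε⟩ := Set.mem_iUnion₂.1 h
      simpa [A, show (fun i => ε i ω) = fun i => spin (σ i) from funext hε] using hσ
  rw [measure_congr hae, measure_biUnion_finset]
  · simp [measure_forall_eq_spin hε.indep hε.measure_eq_pm_one, div_eq_mul_inv]
  · intro σ _ σ' _ hne
    refine Set.disjoint_left.2 fun ω h h' => hne (funext fun i => spin_injective ?_)
    exact (h i).symm.trans (h' i)
  · intro σ _
    rw [Set.ofPred_forall]
    exact MeasurableSet.iInter fun i => hε.measurable i (measurableSet_singleton _)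

variable {g : EuclideanSpace ℝ (Fin n) → ℝ}

theorem IsRademacher.toReal_measure_mean_add_lt_le [IsProbabilityMeasure P]
    (hε : IsRademacher P ε) (hconv : ConvexOn ℝ Set.univ g) (hlip : LipschitzWith 1 g)
    {t : ℝ} (ht : 0 ≤ t) :
    (P {ω | (mean fun σ => g (spinVec σ)) + t < g (WithLp.toLp 2 fun i => ε i ω)}).toReal ≤
      Real.exp (-(t ^ 2 / 8)) := by
  rw [hε.toReal_measure_eq_card fun y => _ < g (WithLp.toLp 2 y),
    div_le_iff₀ (by positivity), mul_comm]
  exact card_mean_add_lt_le hconv hlip ht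

theorem IsRademacher.toReal_measure_lt_mean_sub_le [IsProbabilityMeasure P]
    (hε : IsRademacher P ε) (hconv : ConvexOn ℝ Set.univ g) (hlip : LipschitzWith 1 g)
    {t : ℝ} (ht : 0 ≤ t) :
    (P {ω | g (WithLp.toLp 2 fun i => ε i ω) < (mean fun σ => g (spinVec σ)) - t}).toReal ≤
      Real.exp (-(t ^ 2 / 8)) := by
  rw [hε.toReal_measure_eq_card fun y => g (WithLp.toLp 2 y) < _,
    div_le_iff₀ (by positivity), mul_comm]
  exact card_lt_mean_sub_le hconv hlip ht

end Rademacher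

section OrthonormalRows

variable {D : ℕ} {φ : Fin D → Fin n → ℝ}

def rowMap (φ : Fin D → Fin n → ℝ) :
    EuclideanSpace ℝ (Fin n) →ₗ[ℝ] EuclideanSpace ℝ (Fin D) :=
  Matrix.toLpLin 2 2 (Matrix.of φ)

lemma norm_rowMap_apply (y : EuclideanSpace ℝ (Fin n)) :
    ‖rowMap φ y‖ = √(∑ j, (∑ i, y.ofLp i * φ j i) ^ 2) := by
  simp [rowMap, EuclideanSpace.norm_eq, Matrix.toLpLin_apply, Matrix.mulVec, dotProduct, mul_comm]

lemma norm_rowMap_apply_le (horth : ∀ j j', ∑ i, φ j i * φ j' i = if j = j' then 1 else 0)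
    (y : EuclideanSpace ℝ (Fin n)) : ‖rowMap φ y‖ ≤ ‖y‖ := by
  have hon : Orthonormal ℝ fun j => (WithLp.toLp 2 (φ j) : EuclideanSpace ℝ (Fin n)) :=
    orthonormal_iff_ite.2 fun j j' => by simpa [PiLp.inner_apply, mul_comm] using horth j j'
  rw [norm_rowMap_apply, Real.sqrt_le_left (by positivity)]
  simpa [PiLp.inner_apply, mul_comm] using hon.sum_inner_products_le y (s := univ)

lemma convexOn_norm_rowMap :
    ConvexOn ℝ Set.univ fun y : EuclideanSpace ℝ (Fin n) => ‖rowMap φ y‖ :=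
  (convexOn_norm convex_univ).comp_linearMap _

lemma lipschitzWith_norm_rowMap
    (horth : ∀ j j', ∑ i, φ j i * φ j' i = if j = j' then 1 else 0) :
    LipschitzWith 1 fun y : EuclideanSpace ℝ (Fin n) => ‖rowMap φ y‖ :=
  LipschitzWith.of_dist_le_mul fun y z => by
    simpa [dist_eq_norm] using (abs_norm_sub_norm_le _ _).trans
      (by rw [← map_sub]; exact norm_rowMap_apply_le horth (y - z))

lemma mean_norm_rowMap_sq (horth : ∀ j j', ∑ i, φ j i * φ j' i = if j = j' then 1 else 0) :
    (mean fun σ => ‖rowMap φ (spinVec σ)‖ ^ 2) = D := by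
  have hrow : ∀ j, ∑ i, φ j i ^ 2 = 1 := fun j => by simpa [← sq] using horth j j
  simp only [mean, norm_rowMap_apply, Real.sq_sqrt (Finset.sum_nonneg fun _ _ => sq_nonneg _),
    spinVec_apply]
  rw [Finset.sum_comm]
  simp only [sum_sq_sum_spin_mul, hrow, Finset.sum_const, card_univ, Fintype.card_fin,
    nsmul_eq_mul, mul_one]
  field_simp

lemma mean_norm_rowMap_le_sqrt
    (horth : ∀ j j', ∑ i, φ j i * φ j' i = if j = j' then 1 else 0) :
    (mean fun σ => ‖rowMap φ (spinVec σ)‖) ≤ √D :=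
  (le_abs_self _).trans (Real.abs_le_sqrt (mean_norm_rowMap_sq horth ▸ mean_sq_le_mean_sq _))

lemma sqrt_sub_two_le_mean_norm_rowMap
    (horth : ∀ j j', ∑ i, φ j i * φ j' i = if j = j' then 1 else 0) :
    √(max ((D : ℝ) - 2) 0) ≤ mean fun σ => ‖rowMap φ (spinVec σ)‖ := by
  have hm0 : 0 ≤ mean fun σ => ‖rowMap φ (spinVec σ)‖ :=
    div_nonneg (sum_nonneg fun _ _ => norm_nonneg _) (by positivity)
  rw [← Real.sqrt_sq hm0]
  refine Real.sqrt_le_sqrt (max_le ?_ (sq_nonneg _))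
  simpa [mean_norm_rowMap_sq horth] using
    mean_sq_sub_two_le_sq_mean_norm (norm_rowMap_apply_le horth)

end OrthonormalRows

end

end SignCube

open SignCube

/-- Upper and lower tail bounds for the chi-square type statistic
`χ = (∑_j ⟨ε, φ_j⟩²)^{1/2}`: for every `x > 0`,
`P(χ > √D + 2√(2x)) ≤ e^{−x}` and `P(χ < √((D−2)₊) − 2√(2x)) ≤ e^{−x}`. -/
theorem chi_tail_bounds {n D : ℕ}
    {Ω : Type*} [MeasurableSpace Ω] (P : Measure Ω) [IsProbabilityMeasure P]
    (ε : Fin n → Ω → ℝ) (hmeas : ∀ i, Measurable (ε i))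
    (hind : iIndepFun ε P)
    (hrad : ∀ i, P {ω | ε i ω = 1} = 1/2 ∧ P {ω | ε i ω = -1} = 1/2)
    (φ : Fin D → Fin n → ℝ)
    (horth : ∀ j j', ∑ i, φ j i * φ j' i = if j = j' then 1 else 0)
    (χ : Ω → ℝ)
    (hχ : ∀ ω, χ ω = Real.sqrt (∑ j, (∑ i, ε i ω * φ j i) ^ 2)) :
    ∀ x : ℝ, 0 < x →
      (P {ω | Real.sqrt D + 2 * Real.sqrt (2 * x) < χ ω}).toReal ≤ Real.exp (-x) ∧
      (P {ω | χ ω < Real.sqrt (max ((D : ℝ) - 2) 0) - 2 * Real.sqrt (2 * x)}).toReal ≤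
        Real.exp (-x) := by
  intro x hx
  have hε : IsRademacher P ε := ⟨hmeas, hind, hrad⟩
  have hχL : ∀ ω, χ ω = ‖rowMap φ (WithLp.toLp 2 fun i => ε i ω)‖ :=
    fun ω => by rw [hχ, norm_rowMap_apply]
  have hupper := mean_norm_rowMap_le_sqrt horth
  have hlower := sqrt_sub_two_le_mean_norm_rowMap horth
  have ht : 0 ≤ 2 * √(2 * x) := by positivity
  have htx : -((2 * √(2 * x)) ^ 2 / 8) = -x := by
    rw [mul_pow, Real.sq_sqrt (by positivity)]; ring
  constructor
  · refine le_trans (ENNReal.toReal_mono (measure_ne_top _ _) (measure_mono fun ω h => ?_))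
      (htx ▸ hε.toReal_measure_mean_add_lt_le convexOn_norm_rowMap
        (lipschitzWith_norm_rowMap horth) ht)
    simp only [Set.mem_ofPred_eq, hχL] at h ⊢
    linarith
  · refine le_trans (ENNReal.toReal_mono (measure_ne_top _ _) (measure_mono fun ω h => ?_))
      (htx ▸ hε.toReal_measure_lt_mean_sub_le convexOn_norm_rowMap
        (lipschitzWith_norm_rowMap horth) ht)
    simp only [Set.mem_ofPred_eq, hχL] at h ⊢
    linarith
end
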